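/- arXiv:2202.05543 — 9 statements merged into one kernel-verified Lean document; each statement's English description precedes it below -/
import Mathlib

section
/- For all x, y ∈ ℝ^d and all s ∈ ℝ, one has (1 + |x+y|²)^{s/2} ≤ (2/√3)^{|s|} (1 + |x|²)^{s/2} (1 + |y|²)^{|s|/2}. (Sharpened Peetre inequality: the constant 2/√3 improves the usual 2^{1/2}.) -/
private lemma peetre_key {d : ℕ} (x y : EuclideanSpace ℝ (Fin d)) :
    1 + ‖x + y‖ ^ 2 ≤ 4 / 3 * ((1 + ‖x‖ ^ 2) * (1 + ‖y‖ ^ 2)) := by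
  have h := norm_add_le x y
  nlinarith [norm_nonneg x, norm_nonneg y, norm_nonneg (x + y),
    sq_nonneg (‖x‖ - ‖y‖), sq_nonneg (1 - 2 * ‖x‖ * ‖y‖)]

private lemma peetre_pos_case {d : ℕ} (t : ℝ) (ht : 0 ≤ t) (x y : EuclideanSpace ℝ (Fin d)) :
    (1 + ‖x + y‖ ^ 2) ^ (t / 2) ≤
      (4 / 3 : ℝ) ^ (t / 2) * (1 + ‖x‖ ^ 2) ^ (t / 2) * (1 + ‖y‖ ^ 2) ^ (t / 2) := by
  have h1 : (0:ℝ) ≤ 1 + ‖x + y‖ ^ 2 := by positivity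
  have h := Real.rpow_le_rpow h1 (peetre_key x y) (by positivity : (0:ℝ) ≤ t / 2)
  calc (1 + ‖x + y‖ ^ 2) ^ (t / 2) ≤ (4 / 3 * ((1 + ‖x‖ ^ 2) * (1 + ‖y‖ ^ 2))) ^ (t / 2) := h
    _ = (4 / 3 : ℝ) ^ (t / 2) * (1 + ‖x‖ ^ 2) ^ (t / 2) * (1 + ‖y‖ ^ 2) ^ (t / 2) := by
        rw [Real.mul_rpow (by norm_num) (by positivity),
          Real.mul_rpow (by positivity) (by positivity), mul_assoc]

/-- Sharpened Peetre inequality: ⟨x+y⟩^s ≤ (2/√3)^{|s|} ⟨x⟩^s ⟨y⟩^{|s|}. -/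
theorem peetre_sharp (d : ℕ) (s : ℝ) (x y : EuclideanSpace ℝ (Fin d)) :
    (1 + ‖x + y‖ ^ 2) ^ (s / 2) ≤
      (2 / Real.sqrt 3) ^ |s| * (1 + ‖x‖ ^ 2) ^ (s / 2) * (1 + ‖y‖ ^ 2) ^ (|s| / 2) := by
  have hconst : (2 / Real.sqrt 3) ^ |s| = (4 / 3 : ℝ) ^ (|s| / 2) := by
    have h4 : Real.sqrt 4 = 2 := by
      rw [show (4:ℝ) = 2 ^ 2 by norm_num, Real.sqrt_sq (by norm_num)]
    have h1 : (2 / Real.sqrt 3 : ℝ) = Real.sqrt (4 / 3) := by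
      rw [Real.sqrt_div (by norm_num : (0:ℝ) ≤ 4), h4]
    rw [h1, Real.sqrt_eq_rpow, ← Real.rpow_mul (by norm_num)]
    congr 1
    ring
  rw [hconst]
  rcases abs_cases s with ⟨hs, hs0⟩ | ⟨hs, hs0⟩
  · rw [hs]
    exact peetre_pos_case s hs0 x y
  · rw [hs]
    set t := -s with ht
    have ht0 : 0 ≤ t := by linarith
    have key := peetre_pos_case t ht0 (x + y) (-y)
    simp only [add_neg_cancel_right, norm_neg] at key
    set A := 1 + ‖x + y‖ ^ 2 with hA
    set B := 1 + ‖x‖ ^ 2 with hB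
    set D := (1 + ‖y‖ ^ 2) ^ (t / 2) with hD
    set C := (4 / 3 : ℝ) ^ (t / 2) with hC
    have hApos : (0:ℝ) < A ^ (t / 2) := by positivity
    have hBpos : (0:ℝ) < B ^ (t / 2) := by positivity
    have hst : s / 2 = -(t / 2) := by rw [ht]; ring
    rw [hst, Real.rpow_neg (by positivity) (t/2), Real.rpow_neg (by positivity) (t/2)]
    calc (A ^ (t/2))⁻¹ = ((A ^ (t/2))⁻¹ * (B ^ (t/2))⁻¹) * B ^ (t/2) := by
          field_simp
      _ ≤ ((A ^ (t/2))⁻¹ * (B ^ (t/2))⁻¹) * (C * A ^ (t/2) * D) := by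
          apply mul_le_mul_of_nonneg_left key (by positivity)
      _ = C * (B ^ (t/2))⁻¹ * D * ((A ^ (t/2))⁻¹ * A ^ (t/2)) := by ring
      _ = C * (B ^ (t/2))⁻¹ * D := by rw [inv_mul_cancel₀ hApos.ne']; ring
end

section
/- For every dimension d ≥ 1, the supremum over x, y ∈ ℝ^d of the quantity (1 + |x+y|²) / ((1 + |x|²)(1 + |y|²)) equals 4/3; in particular 3(1 + |x+y|²) ≤ 4(1 + |x|²)(1 + |y|²) for all x, y ∈ ℝ^d, with equality in the supremum attained when y = x and |x|² = 1/2. (This shows the constant 2/√3 in the sharpened Peetre inequality is optimal.) -/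
/-- The supremum over `x, y ∈ ℝ^d` of `(1 + |x+y|²)/((1 + |x|²)(1 + |y|²))` equals `4/3`
(and is attained, e.g. when `y = x` and `|x|² = 1/2`); in particular
`3(1 + |x+y|²) ≤ 4(1 + |x|²)(1 + |y|²)` for all `x, y`. -/
theorem peetre_constant_optimal (d : ℕ) (hd : 1 ≤ d) :
    (∀ x y : EuclideanSpace ℝ (Fin d),
        3 * (1 + ‖x + y‖ ^ 2) ≤ 4 * ((1 + ‖x‖ ^ 2) * (1 + ‖y‖ ^ 2))) ∧
    IsGreatest {q : ℝ | ∃ x y : EuclideanSpace ℝ (Fin d),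
        q = (1 + ‖x + y‖ ^ 2) / ((1 + ‖x‖ ^ 2) * (1 + ‖y‖ ^ 2))} (4 / 3) ∧
    (∀ x : EuclideanSpace ℝ (Fin d), ‖x‖ ^ 2 = 1 / 2 →
        (1 + ‖x + x‖ ^ 2) / ((1 + ‖x‖ ^ 2) * (1 + ‖x‖ ^ 2)) = 4 / 3) := by
  have key : ∀ x y : EuclideanSpace ℝ (Fin d),
      3 * (1 + ‖x + y‖ ^ 2) ≤ 4 * ((1 + ‖x‖ ^ 2) * (1 + ‖y‖ ^ 2)) := by
    intro x y
    have h1 := norm_add_le x y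
    have h2 := norm_nonneg x
    have h3 := norm_nonneg y
    have h4 := norm_nonneg (x + y)
    nlinarith [sq_nonneg (2*‖x‖*‖y‖ - 1), sq_nonneg (‖x‖ - ‖y‖), sq_nonneg (‖x‖ + ‖y‖)]
  have eq3 : ∀ x : EuclideanSpace ℝ (Fin d), ‖x‖ ^ 2 = 1 / 2 →
      (1 + ‖x + x‖ ^ 2) / ((1 + ‖x‖ ^ 2) * (1 + ‖x‖ ^ 2)) = 4 / 3 := by
    intro x hx
    have h : x + x = (2:ℝ) • x := (two_smul ℝ x).symm
    rw [h, norm_smul, mul_pow, hx]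
    norm_num
  refine ⟨key, ⟨?_, ?_⟩, eq3⟩
  · set c := Real.sqrt (1/2) with hc
    set x : EuclideanSpace ℝ (Fin d) := EuclideanSpace.single ⟨0, hd⟩ c with hxdef
    have hx : ‖x‖ ^ 2 = 1/2 := by
      rw [hxdef, EuclideanSpace.norm_single, Real.norm_eq_abs, sq_abs, hc]
      exact Real.sq_sqrt (by norm_num)
    exact ⟨x, x, (eq3 x hx).symm⟩
  · rintro q ⟨x, y, rfl⟩
    have hD : 0 < (1 + ‖x‖ ^ 2) * (1 + ‖y‖ ^ 2) := by positivity
    rw [div_le_div_iff₀ hD (by norm_num : (0:ℝ) < 3)]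
    linarith [key x y]
end

section
/- Let s, t, ε > 0, let U ⊆ ℝ^{2d} be a set, and let f : ℝ^{2d} → ℂ be smooth. Suppose that for every h > 0 there exists C_h > 0 such that for all λ ≥ 1, all k ∈ ℕ and all (x, ξ) ∈ U ⊆ ℝ^d × ℝ^d one has λ^{s k} ε^{2k} |f(λ^t x, λ^s ξ)| ≤ C_h λ^t h^k (k!)^s. Then for every r > 0 there exists a constant C (depending on r, ε, s, t but not on λ) such that e^{r λ} |f(λ^t x, λ^s ξ)| ≤ C for all λ ≥ 1 and all (x, ξ) ∈ U. -/
/-- Lemma 4.2 ("chirp lemma"): if for every `h > 0` there is `C_h > 0` such that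
`λ^{sk} ε^{2k} |f(λ^t x, λ^s ξ)| ≤ C_h λ^t h^k (k!)^s` for all `λ ≥ 1`, `k ∈ ℕ`,
`(x,ξ) ∈ U`, then for every `r > 0` there is a constant `C` (independent of `λ`)
with `e^{rλ} |f(λ^t x, λ^s ξ)| ≤ C` for all `λ ≥ 1` and `(x,ξ) ∈ U`. -/
theorem chirp_lemma (d : ℕ) (s t ε : ℝ) (hs : 0 < s) (ht : 0 < t) (hε : 0 < ε)
    (U : Set (EuclideanSpace ℝ (Fin d) × EuclideanSpace ℝ (Fin d)))
    (f : EuclideanSpace ℝ (Fin d) × EuclideanSpace ℝ (Fin d) → ℂ)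
    (hf : ContDiff ℝ (⊤ : ℕ∞) f)
    (hbound : ∀ h : ℝ, 0 < h → ∃ C : ℝ, 0 < C ∧ ∀ lam : ℝ, 1 ≤ lam → ∀ k : ℕ, ∀ p ∈ U,
      lam ^ (s * (k : ℝ)) * ε ^ (2 * k) * ‖f (lam ^ t • p.1, lam ^ s • p.2)‖ ≤
        C * lam ^ t * h ^ k * (Nat.factorial k : ℝ) ^ s) :
    ∀ r : ℝ, 0 < r → ∃ C : ℝ, ∀ lam : ℝ, 1 ≤ lam → ∀ p ∈ U,
      Real.exp (r * lam) * ‖f (lam ^ t • p.1, lam ^ s • p.2)‖ ≤ C := by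
  intro r hr
  obtain ⟨C, hC0, hC⟩ := hbound (ε ^ 2 * Real.exp (-(r + t + 1))) (by positivity)
  refine ⟨C * Real.exp (r + t), ?_⟩
  intro lam hlam p hp
  set A := ‖f (lam ^ t • p.1, lam ^ s • p.2)‖ with hA
  have hA0 : 0 ≤ A := norm_nonneg _
  have hlam0 : (0:ℝ) < lam := lt_of_lt_of_le one_pos hlam
  set k := ⌊lam⌋₊ with hkdef
  have hkle : (k : ℝ) ≤ lam := Nat.floor_le hlam0.le
  have hkge : lam - 1 ≤ (k : ℝ) := by
    have := Nat.sub_one_lt_floor lam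
    linarith
  have h1 := hC lam hlam k p hp
  -- (k!)^s ≤ lam ^ (s*k)
  have hfact : ((Nat.factorial k : ℝ)) ^ s ≤ lam ^ (s * (k : ℝ)) := by
    have h2 : ((Nat.factorial k : ℝ)) ≤ (k : ℝ) ^ (k : ℕ) := by
      exact_mod_cast Nat.factorial_le_pow k
    calc ((Nat.factorial k : ℝ)) ^ s ≤ ((k : ℝ) ^ (k : ℕ)) ^ s :=
          Real.rpow_le_rpow (by positivity) h2 hs.le
      _ = (k : ℝ) ^ (s * (k : ℝ)) := by
          rw [← Real.rpow_natCast (k : ℝ) k, ← Real.rpow_mul (Nat.cast_nonneg k), mul_comm]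
      _ ≤ lam ^ (s * (k : ℝ)) :=
          Real.rpow_le_rpow (Nat.cast_nonneg k) hkle (by positivity)
  have hrw : (ε ^ 2 * Real.exp (-(r + t + 1))) ^ k
      = ε ^ (2 * k) * Real.exp (-(r + t + 1)) ^ k := by
    rw [mul_pow, pow_mul]
  rw [hrw] at h1
  have hlt : (0:ℝ) < lam ^ t := Real.rpow_pos_of_pos hlam0 t
  have hpos : (0:ℝ) < lam ^ (s * (k : ℝ)) * ε ^ (2 * k) := by
    have := Real.rpow_pos_of_pos hlam0 (s * (k : ℝ))
    positivity
  have h3 : C * lam ^ t * (ε ^ (2 * k) * Real.exp (-(r + t + 1)) ^ k)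
        * ((Nat.factorial k : ℝ)) ^ s
      ≤ C * lam ^ t * (ε ^ (2 * k) * Real.exp (-(r + t + 1)) ^ k)
        * lam ^ (s * (k : ℝ)) := by
    apply mul_le_mul_of_nonneg_left hfact
    positivity
  have key : A ≤ C * lam ^ t * Real.exp (-(r + t + 1)) ^ k := by
    have e1 : lam ^ (s * (k : ℝ)) * ε ^ (2 * k) * A
        ≤ C * lam ^ t * (ε ^ (2 * k) * Real.exp (-(r + t + 1)) ^ k)
          * ((Nat.factorial k : ℝ)) ^ s := h1
    have e2 := e1.trans h3
    have h5 : (lam ^ (s * (k : ℝ)) * ε ^ (2 * k)) * A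
        ≤ (lam ^ (s * (k : ℝ)) * ε ^ (2 * k))
          * (C * lam ^ t * Real.exp (-(r + t + 1)) ^ k) := by
      calc (lam ^ (s * (k : ℝ)) * ε ^ (2 * k)) * A
          = lam ^ (s * (k : ℝ)) * ε ^ (2 * k) * A := by ring
        _ ≤ C * lam ^ t * (ε ^ (2 * k) * Real.exp (-(r + t + 1)) ^ k)
            * lam ^ (s * (k : ℝ)) := e2
        _ = (lam ^ (s * (k : ℝ)) * ε ^ (2 * k))
            * (C * lam ^ t * Real.exp (-(r + t + 1)) ^ k) := by ring
    exact le_of_mul_le_mul_left h5 hpos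
  -- rewrite the exponential power
  have hexp : Real.exp (-(r + t + 1)) ^ k = Real.exp (-(r + t + 1) * (k : ℝ)) := by
    rw [← Real.exp_nat_mul, mul_comm]
  rw [hexp] at key
  -- lam ^ t ≤ exp (t * lam)
  have hlamt : lam ^ t ≤ Real.exp (t * lam) := by
    rw [Real.rpow_def_of_pos hlam0]
    apply Real.exp_le_exp.mpr
    have hlog : Real.log lam ≤ lam := (Real.log_le_sub_one_of_pos hlam0).trans (by linarith)
    calc Real.log lam * t ≤ lam * t := mul_le_mul_of_nonneg_right hlog ht.le
      _ = t * lam := mul_comm _ _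
  have hstep : Real.exp (-(r + t + 1) * (k : ℝ)) ≤ Real.exp (-(r + t + 1) * (lam - 1)) := by
    apply Real.exp_le_exp.mpr
    nlinarith [hkge, hr, ht]
  calc Real.exp (r * lam) * A
      ≤ Real.exp (r * lam) * (C * lam ^ t * Real.exp (-(r + t + 1) * (k : ℝ))) :=
        mul_le_mul_of_nonneg_left key (Real.exp_nonneg _)
    _ ≤ Real.exp (r * lam) * (C * Real.exp (t * lam) * Real.exp (-(r + t + 1) * (lam - 1))) := by
        apply mul_le_mul_of_nonneg_left _ (Real.exp_nonneg _)
        have h6 : lam ^ t * Real.exp (-(r + t + 1) * (k : ℝ))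
            ≤ Real.exp (t * lam) * Real.exp (-(r + t + 1) * (lam - 1)) := by
          apply mul_le_mul hlamt hstep (Real.exp_nonneg _) (Real.exp_nonneg _)
        calc C * lam ^ t * Real.exp (-(r + t + 1) * (k : ℝ))
            = C * (lam ^ t * Real.exp (-(r + t + 1) * (k : ℝ))) := by ring
          _ ≤ C * (Real.exp (t * lam) * Real.exp (-(r + t + 1) * (lam - 1))) :=
              mul_le_mul_of_nonneg_left h6 hC0.le
          _ = C * Real.exp (t * lam) * Real.exp (-(r + t + 1) * (lam - 1)) := by ring
    _ = C * (Real.exp (r * lam) * Real.exp (t * lam)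
          * Real.exp (-(r + t + 1) * (lam - 1))) := by ring
    _ = C * Real.exp (r * lam + t * lam + -(r + t + 1) * (lam - 1)) := by
        rw [← Real.exp_add, ← Real.exp_add]
    _ = C * Real.exp ((r + t + 1) - lam) := by
        rw [show r * lam + t * lam + -(r + t + 1) * (lam - 1) = (r + t + 1) - lam by ring]
    _ ≤ C * Real.exp (r + t) := by
        apply mul_le_mul_of_nonneg_left _ hC0.le
        apply Real.exp_le_exp.mpr
        linarith
end

section
/- Let s, t > 0 and let φ : ℝ^d → ℂ be smooth and satisfy: for every h > 0 there exists C > 0 such that |x^α ∂^β φ(x)| ≤ C h^{|α|+|β|} (α!)^t (β!)^s for all multi-indices α, β ∈ ℕ^d and all x ∈ ℝ^d. Then for every h > 0 and every r > 0 there exists C' > 0 such that |∂^β φ(x)| ≤ C' h^{|β|} (β!)^s e^{−r |x|^{1/t}} for all β ∈ ℕ^d and all x ∈ ℝ^d. -/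
/-- First-order partial derivative in direction `i`. -/
noncomputable def pderiv' {d : ℕ} (i : Fin d) (f : EuclideanSpace ℝ (Fin d) → ℂ) :
    EuclideanSpace ℝ (Fin d) → ℂ :=
  fun x => fderiv ℝ f x (EuclideanSpace.single i 1)

/-- Multi-index iterated partial derivative `∂^β`. -/
noncomputable def mderiv {d : ℕ} (β : Fin d → ℕ) (f : EuclideanSpace ℝ (Fin d) → ℂ) :
    EuclideanSpace ℝ (Fin d) → ℂ :=
  (List.finRange d).foldr (fun i g => (pderiv' i)^[β i] g) f

set_option maxHeartbeats 1000000 in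
/-- If `φ ∈ Σ_t^s(ℝ^d)`, i.e. for every `h > 0` there is `C > 0` with
`|x^α ∂^β φ(x)| ≤ C h^{|α|+|β|} (α!)^t (β!)^s`, then for every `h, r > 0`
there is `C' > 0` such that `|∂^β φ(x)| ≤ C' h^{|β|} (β!)^s e^{-r |x|^{1/t}}`. -/
theorem gelfand_shilov_deriv_decay (d : ℕ) (s t : ℝ) (hs : 0 < s) (ht : 0 < t)
    (φ : EuclideanSpace ℝ (Fin d) → ℂ) (hφ : ContDiff ℝ (⊤ : ℕ∞) φ)
    (hGS : ∀ h : ℝ, 0 < h → ∃ C : ℝ, 0 < C ∧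
      ∀ (α β : Fin d → ℕ) (x : EuclideanSpace ℝ (Fin d)),
        |∏ i, x i ^ α i| * ‖mderiv β φ x‖ ≤
          C * h ^ ((∑ i, α i) + (∑ i, β i)) * ((∏ i, Nat.factorial (α i) : ℕ) : ℝ) ^ t *
            ((∏ i, Nat.factorial (β i) : ℕ) : ℝ) ^ s) :
    ∀ h : ℝ, 0 < h → ∀ r : ℝ, 0 < r → ∃ C : ℝ, 0 < C ∧
      ∀ (β : Fin d → ℕ) (x : EuclideanSpace ℝ (Fin d)),
        ‖mderiv β φ x‖ ≤ C * h ^ (∑ i, β i) * ((∏ i, Nat.factorial (β i) : ℕ) : ℝ) ^ s *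
          Real.exp (-r * ‖x‖ ^ (1 / t)) := by
  intro h hh r hr
  have hE : (0:ℝ) < Real.exp 1 := Real.exp_pos 1
  have ht' : t ≠ 0 := ne_of_gt ht
  set T : ℝ := (t / (Real.exp 1 * r)) ^ t with hTdef
  have hTpos : 0 < T := Real.rpow_pos_of_pos (by positivity) t
  have hsd : (0:ℝ) ≤ Real.sqrt d := Real.sqrt_nonneg _
  set h₀ : ℝ := min h (T / (Real.sqrt d + 1)) with hh₀def
  have hh₀ : 0 < h₀ := lt_min hh (by positivity)
  obtain ⟨C, hC, hbound⟩ := hGS h₀ hh₀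
  refine ⟨C * Real.exp t, by positivity, fun β x => ?_⟩
  set B := ‖mderiv β φ x‖ with hBdef
  have hBnn : 0 ≤ B := norm_nonneg _
  set F : ℝ := ((∏ i, Nat.factorial (β i) : ℕ) : ℝ) ^ s with hFdef
  have hFpos : 0 < F := by
    apply Real.rpow_pos_of_pos
    have : ∀ i ∈ Finset.univ, 0 < Nat.factorial (β i) := fun i _ => Nat.factorial_pos _
    exact_mod_cast Finset.prod_pos this
  set K : ℝ := C * h₀ ^ (∑ i, β i) * F with hKdef
  have hKpos : 0 < K := by positivity
  -- reduce to the key estimate with h₀ in place of h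
  have hfin : K * Real.exp t * Real.exp (-r * ‖x‖ ^ (1 / t)) ≤
      C * Real.exp t * h ^ (∑ i, β i) * F * Real.exp (-r * ‖x‖ ^ (1 / t)) := by
    have h₀h : h₀ ≤ h := min_le_left _ _
    have : K ≤ C * h ^ (∑ i, β i) * F := by
      rw [hKdef]
      gcongr
    nlinarith [Real.exp_pos t, Real.exp_pos (-r * ‖x‖ ^ (1 / t)),
      mul_le_mul_of_nonneg_right this (Real.exp_pos t).le]
  refine le_trans ?_ hfin
  -- base bound (α = 0)
  have base : B ≤ K := by
    have hb := hbound (fun _ => 0) β x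
    simpa [hKdef, hFdef] using hb
  rcases eq_or_lt_of_le (norm_nonneg x) with hx0 | hx0
  · rw [← hx0, Real.zero_rpow (by positivity : (1:ℝ)/t ≠ 0), mul_zero, Real.exp_zero, mul_one]
    exact base.trans (le_mul_of_one_le_right hKpos.le (Real.one_le_exp ht.le))
  · -- ‖x‖ > 0 : pick maximal coordinate
    have hne : Nonempty (Fin d) := by
      by_contra hempty
      simp only [not_nonempty_iff] at hempty
      have : ‖x‖ = 0 := by rw [EuclideanSpace.norm_eq]; simp
      linarith
    obtain ⟨i₀, -, hmax⟩ := Finset.exists_max_image Finset.univ (fun i => |x i|)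
      Finset.univ_nonempty
    set m := |x i₀| with hmdef
    have hnorm : ‖x‖ ≤ Real.sqrt d * m := by
      rw [EuclideanSpace.norm_eq]
      have h1 : ∑ i, ‖x i‖ ^ 2 ≤ (d : ℝ) * m ^ 2 := by
        calc ∑ i, ‖x i‖ ^ 2 ≤ ∑ _i : Fin d, m ^ 2 := by
              apply Finset.sum_le_sum
              intro i _
              have := hmax i (Finset.mem_univ i)
              have hnn : (0:ℝ) ≤ |x i| := abs_nonneg _
              simp only [Real.norm_eq_abs]
              nlinarith
          _ = (d : ℝ) * m ^ 2 := by simp [Finset.sum_const, Fintype.card_fin]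
      calc Real.sqrt (∑ i, ‖x i‖ ^ 2) ≤ Real.sqrt ((d:ℝ) * m ^ 2) := Real.sqrt_le_sqrt h1
        _ = Real.sqrt d * m := by
            rw [Real.sqrt_mul (by positivity), Real.sqrt_sq (abs_nonneg _)]
    have hm : 0 < m := by
      rcases le_or_gt m 0 with h' | h'
      · nlinarith
      · exact h'
    have hd1 : (0:ℝ) < Real.sqrt d := by
      have : 1 ≤ d := by
        rcases hne with ⟨i⟩; exact i.pos
      have : (1:ℝ) ≤ d := by exact_mod_cast this
      have := Real.sqrt_le_sqrt this
      simpa using lt_of_lt_of_le one_pos (by simpa using this)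
    set c : ℝ := Real.sqrt d * h₀ with hcdef
    have hc : 0 < c := by positivity
    have hcT : c ≤ T := by
      have h₂ : h₀ ≤ T / (Real.sqrt d + 1) := min_le_right _ _
      calc c ≤ Real.sqrt d * (T / (Real.sqrt d + 1)) := by
              exact mul_le_mul_of_nonneg_left h₂ hsd
        _ ≤ T := by
            rw [mul_div_assoc']
            rw [div_le_iff₀ (by positivity)]
            nlinarith
    -- the family of bounds
    have main : ∀ n : ℕ, ‖x‖ ^ n * B ≤ c ^ n * K * ((n.factorial : ℕ) : ℝ) ^ t := by
      intro n
      have hb := hbound (fun i => if i = i₀ then n else 0) β x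
      have e1 : (∏ i, x i ^ (if i = i₀ then n else 0)) = x i₀ ^ n := by
        rw [Finset.prod_congr rfl (g := fun i => if i = i₀ then x i₀ ^ n else 1)
          (fun i _ => by rcases eq_or_ne i i₀ with rfl | hi <;> simp [*])]
        simp
      have e2 : (∑ i, (if i = i₀ then n else 0)) = n := by simp
      have e3 : (∏ i, Nat.factorial (if i = i₀ then n else 0)) = n.factorial := by
        rw [Finset.prod_congr rfl (g := fun i => if i = i₀ then n.factorial else 1)
          (fun i _ => by rcases eq_or_ne i i₀ with rfl | hi <;> simp [*])]
        simp
      rw [e1, e2, e3] at hb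
      have hb' : m ^ n * B ≤ C * h₀ ^ (n + ∑ i, β i) * ((n.factorial : ℕ) : ℝ) ^ t * F := by
        calc m ^ n * B = |x i₀ ^ n| * B := by rw [abs_pow]
          _ ≤ _ := hb
      have hxm : ‖x‖ ^ n ≤ (Real.sqrt d) ^ n * m ^ n := by
        rw [← mul_pow]
        exact pow_le_pow_left₀ (norm_nonneg x) hnorm n
      calc ‖x‖ ^ n * B ≤ (Real.sqrt d) ^ n * m ^ n * B := by
            exact mul_le_mul_of_nonneg_right hxm hBnn
        _ = (Real.sqrt d) ^ n * (m ^ n * B) := by ring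
        _ ≤ (Real.sqrt d) ^ n * (C * h₀ ^ (n + ∑ i, β i) * ((n.factorial : ℕ) : ℝ) ^ t * F) := by
            apply mul_le_mul_of_nonneg_left hb' (by positivity)
        _ = c ^ n * K * ((n.factorial : ℕ) : ℝ) ^ t := by
            rw [hcdef, hKdef, mul_pow, pow_add]; ring
    -- choose n
    set u := ‖x‖ with hudef
    set n : ℕ := ⌊(u / c) ^ (1/t) / Real.exp 1⌋₊ with hndef
    have huc : (0:ℝ) ≤ u / c := by positivity
    have hfl : (n : ℝ) * Real.exp 1 ≤ (u / c) ^ (1/t) := by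
      have := Nat.floor_le (show (0:ℝ) ≤ (u / c) ^ (1/t) / Real.exp 1 by positivity)
      rw [← le_div_iff₀ hE]
      exact this
    have hnt : ((n:ℝ)) ^ t * Real.exp t ≤ u / c := by
      have h1 : ((n:ℝ) * Real.exp 1) ^ t ≤ ((u / c) ^ (1/t)) ^ t :=
        Real.rpow_le_rpow (by positivity) hfl ht.le
      rw [Real.mul_rpow (Nat.cast_nonneg n) hE.le, Real.exp_one_rpow] at h1
      rwa [one_div, Real.rpow_inv_rpow huc ht'] at h1
    have hstep : ((n:ℝ)) ^ t * (c / u) ≤ Real.exp (-t) := by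
      have h2 : ((n:ℝ)) ^ t ≤ (u / c) * Real.exp (-t) := by
        rw [Real.exp_neg, ← div_eq_mul_inv, le_div_iff₀ (Real.exp_pos t)]
        exact hnt
      calc ((n:ℝ)) ^ t * (c / u) ≤ ((u / c) * Real.exp (-t)) * (c / u) :=
            mul_le_mul_of_nonneg_right h2 (by positivity)
        _ = Real.exp (-t) * ((u / c) * (c / u)) := by ring
        _ = Real.exp (-t) := by
            rw [div_mul_div_comm, mul_comm c u, div_self (by positivity), mul_one]
    have hfact : ((n.factorial : ℕ) : ℝ) ^ t ≤ ((n:ℝ) ^ t) ^ n := by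
      have h1 : ((n.factorial : ℕ) : ℝ) ≤ (n:ℝ) ^ n := by
        exact_mod_cast Nat.factorial_le_pow n
      calc ((n.factorial : ℕ) : ℝ) ^ t ≤ ((n:ℝ) ^ n) ^ t :=
            Real.rpow_le_rpow (by positivity) h1 ht.le
        _ = ((n:ℝ) ^ t) ^ n := by
            rw [← Real.rpow_natCast ((n:ℝ)) n, ← Real.rpow_natCast ((n:ℝ) ^ t) n,
              ← Real.rpow_mul (Nat.cast_nonneg n), ← Real.rpow_mul (Nat.cast_nonneg n),
              mul_comm]
    have hun : (0:ℝ) < u ^ n := pow_pos hx0 n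
    have hdiv : B ≤ K * (((n.factorial : ℕ) : ℝ) ^ t * (c / u) ^ n) := by
      rw [div_pow, mul_div_assoc', mul_div_assoc', le_div_iff₀ hun]
      calc B * u ^ n = u ^ n * B := mul_comm _ _
        _ ≤ c ^ n * K * ((n.factorial : ℕ) : ℝ) ^ t := main n
        _ = K * (((n.factorial : ℕ) : ℝ) ^ t * c ^ n) := by ring
    have hpow : ((n.factorial : ℕ) : ℝ) ^ t * (c / u) ^ n ≤ Real.exp (-(t * n)) := by
      calc ((n.factorial : ℕ) : ℝ) ^ t * (c / u) ^ n ≤ ((n:ℝ) ^ t) ^ n * (c / u) ^ n :=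
            mul_le_mul_of_nonneg_right hfact (by positivity)
        _ = ((n:ℝ) ^ t * (c / u)) ^ n := (mul_pow _ _ _).symm
        _ ≤ (Real.exp (-t)) ^ n := pow_le_pow_left₀ (by positivity) hstep n
        _ = Real.exp (-(t * n)) := by rw [← Real.exp_nat_mul]; congr 1; ring
    have hexp : Real.exp (-(t * n)) ≤ Real.exp t * Real.exp (-r * u ^ (1/t)) := by
      rw [← Real.exp_add, Real.exp_le_exp]
      have hce : c ^ (1/t) ≤ t / (Real.exp 1 * r) := by
        rw [one_div]
        have h1 := Real.rpow_le_rpow hc.le hcT (by positivity : (0:ℝ) ≤ t⁻¹)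
        rwa [hTdef, Real.rpow_rpow_inv (by positivity) ht'] at h1
      have h3 : r ≤ t / (Real.exp 1 * c ^ (1/t)) := by
        rw [le_div_iff₀ (by positivity)]
        rw [le_div_iff₀ (by positivity)] at hce
        nlinarith [Real.rpow_pos_of_pos hc (1/t)]
      have h2 : r * u ^ (1/t) ≤ t * ((u / c) ^ (1/t)) / Real.exp 1 := by
        rw [Real.div_rpow hx0.le hc.le]
        calc r * u ^ (1/t) ≤ (t / (Real.exp 1 * c ^ (1/t))) * u ^ (1/t) :=
              mul_le_mul_of_nonneg_right h3 (by positivity)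
          _ = t * (u ^ (1/t) / c ^ (1/t)) / Real.exp 1 := by
              field_simp
      have h5 : (u / c) ^ (1/t) / Real.exp 1 < (n:ℝ) + 1 := Nat.lt_floor_add_one _
      have h4 : t * ((u / c) ^ (1/t)) / Real.exp 1 ≤ t * ((n:ℝ) + 1) := by
        calc t * ((u / c) ^ (1/t)) / Real.exp 1 = t * ((u / c) ^ (1/t) / Real.exp 1) := by
              ring
          _ ≤ t * ((n:ℝ) + 1) := by nlinarith
      nlinarith
    calc B ≤ K * (((n.factorial : ℕ) : ℝ) ^ t * (c / u) ^ n) := hdiv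
      _ ≤ K * Real.exp (-(t * n)) := mul_le_mul_of_nonneg_left hpow hKpos.le
      _ ≤ K * (Real.exp t * Real.exp (-r * u ^ (1/t))) :=
            mul_le_mul_of_nonneg_left hexp hKpos.le
      _ = K * Real.exp t * Real.exp (-r * ‖x‖ ^ (1/t)) := by rw [hKdef, ← hudef]; ring
end

section
/- Let s, t > 0 and let F, H : ℝ^d × ℝ^d → [0, ∞) be measurable. Assume: (a) there exist C₀, r₁ > 0 such that F(y, η) ≤ C₀ e^{r₁(|y|^{1/t} + |η|^{1/s})} for all (y, η); (b) for every r > 0 there exists C_r > 0 such that H(y, η) ≤ C_r e^{−r(|y|^{1/t} + |η|^{1/s})} for all (y, η); (c) U ⊆ ℝ^{2d} is a set such that for every r > 0 the supremum over λ > 0 and (x, ξ) ∈ U of e^{r λ} F(λ^t x, λ^s ξ) is finite. Let V ⊆ ℝ^{2d} be bounded and let ε ∈ (0,1] satisfy V + B_ε ⊆ U, where B_ε is the open Euclidean ball of radius ε in ℝ^{2d} centered at 0. Then for every r > 0 the supremum over λ > 0 and (x, ξ) ∈ V of e^{r λ} (F * H)(λ^t x, λ^s ξ) is finite, where (F * H)(z)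 = ∫_{ℝ^{2d}} F(z − w) H(w) dw. (This is the analytic core of the independence of the anisotropic Gelfand–Shilov wave front set from the choice of window: F plays the role of |V_ψ u| and H of |V_φ ψ|.) -/
/-!
Let `ρ = gsWeight t s`, i.e. `ρ (y, η) = ‖y‖ ^ (1 / t) + ‖η‖ ^ (1 / s)`, and let `δ_λ` be the
anisotropic dilation. Then `ρ (δ_λ z) = λ ρ z` and `ρ (z - w) ≤ K (ρ z + ρ w)`. In the
convolution at `δ_λ p` write `w = δ_λ q`. If `q` is `ε`-small, then `p - q ∈ U`, so
`e^{rλ} F (δ_λ (p - q))` is bounded uniformly and `H w ≤ C e^{-ρ w}`. Otherwise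
`ρ w = λ ρ q ≥ c λ` for some `c > 0`, so choosing `R` large in the decay `H w ≤ C_R e^{-R ρ w}`
absorbs both `e^{rλ}` and the growth `F (δ_λ p - w) ≤ C₀ e^{r₁ K (λ N + ρ w)}` of `F`.
Either way the integrand is at most `D e^{-ρ w}`, which is integrable.
-/

open MeasureTheory Real

theorem integrable_exp_neg_norm_rpow {E : Type*} [NormedAddCommGroup E] [NormedSpace ℝ E]
    [FiniteDimensional ℝ E] [MeasurableSpace E] [BorelSpace E] (μ : Measure E)
    [μ.IsAddHaarMeasure] {p : ℝ} (hp : 0 < p) :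
    Integrable (fun x : E ↦ exp (-‖x‖ ^ p)) μ := by
  obtain hE | hE := subsingleton_or_nontrivial E
  · simp only [Subsingleton.elim _ (0 : E)]
    exact integrable_const _
  refine (integrable_fun_norm_addHaar μ (f := fun y ↦ exp (-y ^ p))).mpr ?_
  refine (integrableOn_rpow_mul_exp_neg_rpow (s := (Module.finrank ℝ E - 1 : ℕ))
    (neg_one_lt_zero.trans_le (Nat.cast_nonneg _)) hp).congr_fun (fun y _ ↦ ?_) measurableSet_Ioi
  simp [rpow_natCast]

theorem Real.add_rpow_le_two_rpow_mul_rpow_add_rpow {a b p : ℝ} (ha : 0 ≤ a) (hb : 0 ≤ b)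
    (hp : 0 ≤ p) : (a + b) ^ p ≤ 2 ^ p * (a ^ p + b ^ p) := calc
  (a + b) ^ p ≤ (2 * max a b) ^ p := by rw [two_mul]; gcongr <;> simp
  _ = 2 ^ p * max (a ^ p) (b ^ p) := by
    rw [mul_rpow zero_le_two (ha.trans (le_max_left a b)), rpow_max ha hb hp]
  _ ≤ 2 ^ p * (a ^ p + b ^ p) := by
    gcongr; exact max_le_add_of_nonneg (rpow_nonneg ha p) (rpow_nonneg hb p)

theorem norm_sub_rpow_le {G : Type*} [NormedAddCommGroup G] {p : ℝ} (hp : 0 ≤ p) (x y : G) :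
    ‖x - y‖ ^ p ≤ 2 ^ p * (‖x‖ ^ p + ‖y‖ ^ p) :=
  (rpow_le_rpow (norm_nonneg _) (norm_sub_le x y) hp).trans
    (add_rpow_le_two_rpow_mul_rpow_add_rpow (norm_nonneg x) (norm_nonneg y) hp)

noncomputable section

variable {E E' : Type*} [NormedAddCommGroup E] [NormedAddCommGroup E'] {t s : ℝ}

def gsWeight (t s : ℝ) (z : E × E') : ℝ := ‖z.1‖ ^ (1 / t) + ‖z.2‖ ^ (1 / s)

theorem gsWeight_nonneg (t s : ℝ) (z : E × E') : 0 ≤ gsWeight t s z := by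
  unfold gsWeight; positivity

theorem gsWeight_sub_le (ht : 0 ≤ t) (hs : 0 ≤ s) (z w : E × E') :
    gsWeight t s (z - w) ≤
      max (2 ^ (1 / t)) (2 ^ (1 / s)) * (gsWeight t s z + gsWeight t s w) := calc
  gsWeight t s (z - w)
      ≤ 2 ^ (1 / t) * (‖z.1‖ ^ (1 / t) + ‖w.1‖ ^ (1 / t))
        + 2 ^ (1 / s) * (‖z.2‖ ^ (1 / s) + ‖w.2‖ ^ (1 / s)) :=
    add_le_add (norm_sub_rpow_le (by positivity) z.1 w.1)
      (norm_sub_rpow_le (by positivity) z.2 w.2)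
  _ ≤ max (2 ^ (1 / t)) (2 ^ (1 / s)) * (‖z.1‖ ^ (1 / t) + ‖w.1‖ ^ (1 / t))
        + max (2 ^ (1 / t)) (2 ^ (1 / s)) * (‖z.2‖ ^ (1 / s) + ‖w.2‖ ^ (1 / s)) := by
    gcongr
    exacts [le_max_left _ _, le_max_right _ _]
  _ = _ := by simp only [gsWeight]; ring

theorem min_le_gsWeight_of_sq_le (ht : 0 ≤ t) (hs : 0 ≤ s) {ε : ℝ} (hε : 0 ≤ ε)
    {q : E × E'} (hq : ε ^ 2 ≤ ‖q.1‖ ^ 2 + ‖q.2‖ ^ 2) :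
    min ((ε / 2) ^ (1 / t)) ((ε / 2) ^ (1 / s)) ≤ gsWeight t s q := by
  have h : ε / 2 ≤ ‖q.1‖ ∨ ε / 2 ≤ ‖q.2‖ := by
    by_contra! h
    nlinarith [norm_nonneg q.1, norm_nonneg q.2]
  have h₁ := rpow_nonneg (norm_nonneg q.1) (1 / t)
  have h₂ := rpow_nonneg (norm_nonneg q.2) (1 / s)
  unfold gsWeight
  rcases h with h | h
  · have := rpow_le_rpow (by positivity) h (by positivity : 0 ≤ 1 / t)
    linarith [min_le_left ((ε / 2) ^ (1 / t)) ((ε / 2) ^ (1 / s))]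
  · have := rpow_le_rpow (by positivity) h (by positivity : 0 ≤ 1 / s)
    linarith [min_le_right ((ε / 2) ^ (1 / t)) ((ε / 2) ^ (1 / s))]

theorem Bornology.IsBounded.exists_gsWeight_le (ht : 0 ≤ t) (hs : 0 ≤ s) {V : Set (E × E')}
    (hV : Bornology.IsBounded V) : ∃ N, 0 ≤ N ∧ ∀ p ∈ V, gsWeight t s p ≤ N := by
  obtain ⟨M, hM⟩ := hV.exists_norm_le
  refine ⟨max M 0 ^ (1 / t) + max M 0 ^ (1 / s), by positivity, fun p hp ↦ add_le_add ?_ ?_⟩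
  · exact rpow_le_rpow (norm_nonneg _) ((norm_fst_le p).trans ((hM p hp).trans (le_max_left _ _)))
      (by positivity)
  · exact rpow_le_rpow (norm_nonneg _) ((norm_snd_le p).trans ((hM p hp).trans (le_max_left _ _)))
      (by positivity)

theorem integrable_exp_neg_gsWeight [NormedSpace ℝ E] [FiniteDimensional ℝ E] [MeasureSpace E]
    [BorelSpace E] [(volume : Measure E).IsAddHaarMeasure] [NormedSpace ℝ E']
    [FiniteDimensional ℝ E'] [MeasureSpace E'] [BorelSpace E']
    [(volume : Measure E').IsAddHaarMeasure] (ht : 0 < t) (hs : 0 < s) :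
    Integrable (fun z : E × E' ↦ exp (-gsWeight t s z)) := by
  have h := (integrable_exp_neg_norm_rpow (volume : Measure E) (one_div_pos.mpr ht)).mul_prod
    (integrable_exp_neg_norm_rpow (volume : Measure E') (one_div_pos.mpr hs))
  rw [← Measure.volume_eq_prod] at h
  simpa only [gsWeight, neg_add, exp_add] using h

variable [NormedSpace ℝ E] [NormedSpace ℝ E']

def anisoDilation (t s lam : ℝ) (p : E × E') : E × E' := (lam ^ t • p.1, lam ^ s • p.2)

theorem anisoDilation_sub (t s lam : ℝ) (p q : E × E') :
    anisoDilation t s lam (p - q) = anisoDilation t s lam p - anisoDilation t s lam q := by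
  simp [anisoDilation, smul_sub]

theorem anisoDilation_anisoDilation_inv {lam : ℝ} (hlam : 0 < lam) (w : E × E') :
    anisoDilation t s lam (anisoDilation t s lam⁻¹ w) = w := by
  simp [anisoDilation, inv_rpow hlam.le, smul_inv_smul₀ (rpow_pos_of_pos hlam _).ne']

theorem gsWeight_anisoDilation (ht : t ≠ 0) (hs : s ≠ 0) {lam : ℝ} (hlam : 0 ≤ lam)
    (p : E × E') : gsWeight t s (anisoDilation t s lam p) = lam * gsWeight t s p := by
  have key {u : ℝ} (hu : u ≠ 0) {x : ℝ} (hx : 0 ≤ x) :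
      (lam ^ u * x) ^ (1 / u) = lam * x ^ (1 / u) := by
    rw [mul_rpow (rpow_nonneg hlam u) hx, ← rpow_mul hlam, mul_one_div_cancel hu, rpow_one]
  simp only [gsWeight, anisoDilation, norm_smul, norm_of_nonneg (rpow_nonneg hlam _),
    key ht (norm_nonneg _), key hs (norm_nonneg _), mul_add]

theorem exp_mul_mul_le_of_le_gsWeight (ht : t ≠ 0) (hs : s ≠ 0) {F H : E × E' → ℝ}
    {C₀ r₁ C R K N c r lam : ℝ} {p w : E × E'} (hC₀ : 0 ≤ C₀) (hr₁ : 0 ≤ r₁)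
    (hF : ∀ z, F z ≤ C₀ * exp (r₁ * gsWeight t s z)) (hH0 : 0 ≤ H w)
    (hH : H w ≤ C * exp (-R * gsWeight t s w))
    (hK : ∀ z w : E × E', gsWeight t s (z - w) ≤ K * (gsWeight t s z + gsWeight t s w))
    (hK0 : 0 ≤ K) (hp : gsWeight t s p ≤ N) (hr : 0 ≤ r) (hN : 0 ≤ N) (hc : 0 < c)
    (hlam : 0 ≤ lam) (hw : c * lam ≤ gsWeight t s w)
    (hR : r₁ * K + 1 + (r + r₁ * K * N) / c ≤ R) :
    exp (r * lam) * (F (anisoDilation t s lam p - w) * H w) ≤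
      C₀ * C * exp (-gsWeight t s w) := by
  set a := gsWeight t s (anisoDilation t s lam p - w)
  set b := gsWeight t s w
  have ha : a ≤ K * (lam * N + b) := (hK _ _).trans <| by
    rw [gsWeight_anisoDilation ht hs hlam]; gcongr
  have hb : (r + r₁ * K * N) * lam ≤ (r + r₁ * K * N) / c * b := by
    rw [div_mul_eq_mul_div, le_div_iff₀ hc]
    calc (r + r₁ * K * N) * lam * c = (r + r₁ * K * N) * (c * lam) := by ring
      _ ≤ (r + r₁ * K * N) * b := by gcongr
  have hexp : r * lam + r₁ * a + -R * b ≤ -b := by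
    nlinarith [mul_le_mul_of_nonneg_right hR (gsWeight_nonneg t s w),
      mul_le_mul_of_nonneg_left ha hr₁]
  calc exp (r * lam) * (F (anisoDilation t s lam p - w) * H w)
      ≤ exp (r * lam) * (C₀ * exp (r₁ * a) * (C * exp (-R * b))) := by
        gcongr
        exact hF _
    _ = C₀ * C * exp (r * lam + r₁ * a + -R * b) := by rw [exp_add, exp_add]; ring
    _ ≤ C₀ * C * exp (-b) := by
        have : 0 ≤ C := by nlinarith [exp_pos (-R * b)]
        gcongr

theorem exists_exp_mul_mul_le_exp_neg_gsWeight (ht : 0 < t) (hs : 0 < s) {F H : E × E' → ℝ}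
    (hH0 : ∀ z, 0 ≤ H z) {C₀ r₁ : ℝ} (hC₀ : 0 ≤ C₀) (hr₁ : 0 ≤ r₁)
    (hF : ∀ z, F z ≤ C₀ * exp (r₁ * gsWeight t s z))
    (hH : ∀ R : ℝ, 0 < R → ∃ C : ℝ, 0 < C ∧ ∀ z, H z ≤ C * exp (-R * gsWeight t s z))
    {U V : Set (E × E')} {r : ℝ} (hr : 0 ≤ r)
    (hU : ∃ C : ℝ, ∀ lam : ℝ, 0 < lam → ∀ p ∈ U, exp (r * lam) * F (anisoDilation t s lam p) ≤ C)
    (hV : Bornology.IsBounded V) {ε : ℝ} (hε : 0 < ε)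
    (hVU : ∀ p ∈ V, ∀ q : E × E', ‖q.1‖ ^ 2 + ‖q.2‖ ^ 2 < ε ^ 2 → p + q ∈ U) :
    ∃ D, ∀ lam : ℝ, 0 < lam → ∀ p ∈ V, ∀ w,
      exp (r * lam) * (F (anisoDilation t s lam p - w) * H w) ≤ D * exp (-gsWeight t s w) := by
  obtain ⟨N, hN, hVN⟩ := hV.exists_gsWeight_le (t := t) (s := s) ht.le hs.le
  set K : ℝ := max (2 ^ (1 / t)) (2 ^ (1 / s))
  set c : ℝ := min ((ε / 2) ^ (1 / t)) ((ε / 2) ^ (1 / s))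
  have hc : 0 < c := lt_min (by positivity) (by positivity)
  obtain ⟨C₁, hC₁⟩ := hU
  obtain ⟨C_near, hC_near, hH_near⟩ := hH 1 one_pos
  obtain ⟨C_far, hC_far, hH_far⟩ := hH (r₁ * K + 1 + (r + r₁ * K * N) / c) (by positivity)
  refine ⟨max C₁ 0 * C_near + C₀ * C_far, fun lam hlam p hp w ↦ ?_⟩
  obtain ⟨q, rfl⟩ : ∃ q, anisoDilation t s lam q = w :=
    ⟨_, anisoDilation_anisoDilation_inv hlam w⟩
  have h_near_nonneg : 0 ≤ max C₁ 0 * C_near * exp (-gsWeight t s (anisoDilation t s lam q)) := by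
    positivity
  have h_far_nonneg : 0 ≤ C₀ * C_far * exp (-gsWeight t s (anisoDilation t s lam q)) := by
    positivity
  by_cases hq : ‖q.1‖ ^ 2 + ‖q.2‖ ^ 2 < ε ^ 2
  · have hpq : p - q ∈ U := by
      simpa [sub_eq_add_neg] using hVU p hp (-q) (by simpa using hq)
    calc exp (r * lam) * (F (anisoDilation t s lam p - anisoDilation t s lam q)
          * H (anisoDilation t s lam q))
        = exp (r * lam) * F (anisoDilation t s lam (p - q)) * H (anisoDilation t s lam q) := by
          rw [anisoDilation_sub, mul_assoc]
      _ ≤ max C₁ 0 * (C_near * exp (-1 * gsWeight t s (anisoDilation t s lam q))) :=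
          mul_le_mul ((hC₁ lam hlam _ hpq).trans (le_max_left _ _)) (hH_near _) (hH0 _)
            (le_max_right _ _)
      _ ≤ _ := by rw [neg_one_mul, add_mul, mul_assoc]; linarith
  · have hw : c * lam ≤ gsWeight t s (anisoDilation t s lam q) := by
      rw [gsWeight_anisoDilation ht.ne' hs.ne' hlam.le, mul_comm]
      exact mul_le_mul_of_nonneg_left
        (min_le_gsWeight_of_sq_le ht.le hs.le hε.le (not_lt.mp hq)) hlam.le
    rw [add_mul]
    linarith [exp_mul_mul_le_of_le_gsWeight ht.ne' hs.ne' hC₀ hr₁ hF (hH0 _) (hH_far _)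
      (gsWeight_sub_le ht.le hs.le) (by positivity) (hVN p hp) hr hN hc hlam.le hw le_rfl]

end

theorem window_invariance_core_general (d : ℕ) (s t : ℝ) (hs : 0 < s) (ht : 0 < t)
    (F H : EuclideanSpace ℝ (Fin d) × EuclideanSpace ℝ (Fin d) → ℝ)
    (hF0 : ∀ z, 0 ≤ F z) (hH0 : ∀ z, 0 ≤ H z)
    (ha : ∃ C₀ : ℝ, 0 < C₀ ∧ ∃ r₁ : ℝ, 0 < r₁ ∧ ∀ z,
      F z ≤ C₀ * Real.exp (r₁ * (‖z.1‖ ^ (1 / t) + ‖z.2‖ ^ (1 / s))))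
    (hb : ∀ r : ℝ, 0 < r → ∃ C : ℝ, 0 < C ∧ ∀ z,
      H z ≤ C * Real.exp (-r * (‖z.1‖ ^ (1 / t) + ‖z.2‖ ^ (1 / s))))
    (U V : Set (EuclideanSpace ℝ (Fin d) × EuclideanSpace ℝ (Fin d)))
    (hc : ∀ r : ℝ, 0 < r → ∃ C : ℝ, ∀ lam : ℝ, 0 < lam → ∀ p ∈ U,
      Real.exp (r * lam) * F (lam ^ t • p.1, lam ^ s • p.2) ≤ C)
    (hV : Bornology.IsBounded V) (ε : ℝ) (hε : 0 < ε)
    (hVU : ∀ p ∈ V, ∀ q : EuclideanSpace ℝ (Fin d) × EuclideanSpace ℝ (Fin d),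
      ‖q.1‖ ^ 2 + ‖q.2‖ ^ 2 < ε ^ 2 → p + q ∈ U) :
    ∀ r : ℝ, 0 < r → ∃ C : ℝ, ∀ lam : ℝ, 0 < lam → ∀ p ∈ V,
      Real.exp (r * lam) *
        (∫ w : EuclideanSpace ℝ (Fin d) × EuclideanSpace ℝ (Fin d),
          F ((lam ^ t • p.1, lam ^ s • p.2) - w) * H w) ≤ C := by
  obtain ⟨C₀, hC₀, r₁, hr₁, hF⟩ := ha
  intro r hr
  obtain ⟨D, hD⟩ := exists_exp_mul_mul_le_exp_neg_gsWeight ht hs hH0 hC₀.le hr₁.le hF hb hr.le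
    (hc r hr) hV hε hVU
  refine ⟨D * ∫ w : EuclideanSpace ℝ (Fin d) × EuclideanSpace ℝ (Fin d), exp (-gsWeight t s w),
    fun lam hlam p hp ↦ ?_⟩
  rw [← integral_const_mul, ← integral_const_mul]
  exact integral_mono_of_nonneg (.of_forall fun w ↦ mul_nonneg (exp_nonneg _)
      (mul_nonneg (hF0 _) (hH0 w)))
    ((integrable_exp_neg_gsWeight ht hs).const_mul D) (.of_forall (hD lam hlam p hp))

/-- The analytic core of window-invariance of the anisotropic Gelfand–Shilov wave front
set: super-exponential decay of `F` along anisotropic dilations over `U` transfers to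
the convolution `F * H` over a slightly smaller bounded set `V` with `V + B_ε ⊆ U`,
provided `F` has at most Gelfand–Shilov exponential growth and `H` has
Gelfand–Shilov super-exponential decay. -/
theorem window_invariance_core (d : ℕ) (s t : ℝ) (hs : 0 < s) (ht : 0 < t)
    (F H : EuclideanSpace ℝ (Fin d) × EuclideanSpace ℝ (Fin d) → ℝ)
    (hFmeas : Measurable F) (hHmeas : Measurable H)
    (hF0 : ∀ z, 0 ≤ F z) (hH0 : ∀ z, 0 ≤ H z)
    (ha : ∃ C₀ : ℝ, 0 < C₀ ∧ ∃ r₁ : ℝ, 0 < r₁ ∧ ∀ z,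
      F z ≤ C₀ * Real.exp (r₁ * (‖z.1‖ ^ (1 / t) + ‖z.2‖ ^ (1 / s))))
    (hb : ∀ r : ℝ, 0 < r → ∃ C : ℝ, 0 < C ∧ ∀ z,
      H z ≤ C * Real.exp (-r * (‖z.1‖ ^ (1 / t) + ‖z.2‖ ^ (1 / s))))
    (U V : Set (EuclideanSpace ℝ (Fin d) × EuclideanSpace ℝ (Fin d)))
    (hc : ∀ r : ℝ, 0 < r → ∃ C : ℝ, ∀ lam : ℝ, 0 < lam → ∀ p ∈ U,
      Real.exp (r * lam) * F (lam ^ t • p.1, lam ^ s • p.2) ≤ C)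
    (hV : Bornology.IsBounded V) (ε : ℝ) (hε : 0 < ε) (hε1 : ε ≤ 1)
    (hVU : ∀ p ∈ V, ∀ q : EuclideanSpace ℝ (Fin d) × EuclideanSpace ℝ (Fin d),
      ‖q.1‖ ^ 2 + ‖q.2‖ ^ 2 < ε ^ 2 → p + q ∈ U) :
    ∀ r : ℝ, 0 < r → ∃ C : ℝ, ∀ lam : ℝ, 0 < lam → ∀ p ∈ V,
      Real.exp (r * lam) *
        (∫ w : EuclideanSpace ℝ (Fin d) × EuclideanSpace ℝ (Fin d),
          F ((lam ^ t • p.1, lam ^ s • p.2) - w) * H w) ≤ C :=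
  window_invariance_core_general d s t hs ht F H hF0 hH0 ha hb U V hc hV ε hε hVU
end

section
/- Let s, t > 0, let c : ℕ^d → ℂ be coefficients such that for every r > 0 the sum Σ_{α ∈ ℕ^d} |c_α| r^{|α|} (α!)^s is finite, and let φ : ℝ^d → ℂ be smooth and satisfy: for every h > 0 there exists C > 0 such that |x^α ∂^β φ(x)| ≤ C h^{|α|+|β|} (α!)^t (β!)^s for all multi-indices α, β and all x. Define F : ℝ^d × ℝ^d → ℂ by F(x, ξ) = Σ_{α ∈ ℕ^d} c_α Σ_{β ≤ α} binom(α, β) ξ^β conj((D^{α−β} φ)(−x)), where D^γ = (−i)^{|γ|} ∂^γ. Then: (1) this double series converges absolutely for every (x, ξ); (2) for every (x₀, ξ₀) ∈ ℝ^{2d} with x₀ ≠ 0 there exists an open set U containing (x₀, ξ₀) such that for every r > 0 the supremum over λ > 0 and (x, ξ) ∈ U of e^{r λ} |F(λ^t x, λ^s ξ)| is finite. (F is, up to the constant (2π)^{−d/2}, the short-time Fourier transform of the ultradistribution u = Σ_α c_α D^α δ₀, so this expresses WF^{t,s}(u) ⊆ {0} × (ℝ^d ∖ 0).) -/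
/-- The general term of the STFT expansion of `u = ∑_α c_α D^α δ₀`:
`c_α · ∑_{β ≤ α} binom(α,β) ξ^β conj((D^{α-β}φ)(-x))`, where `D^γ = (-i)^{|γ|}∂^γ`. -/
noncomputable def diracSeriesTerm {d : ℕ} (c : (Fin d → ℕ) → ℂ)
    (φ : EuclideanSpace ℝ (Fin d) → ℂ) (x ξ : EuclideanSpace ℝ (Fin d))
    (α : Fin d → ℕ) : ℂ :=
  c α * ∑ β ∈ Finset.Iic α,
    (∏ i, ((α i).choose (β i) : ℂ)) * (∏ i, ((ξ i : ℝ) : ℂ) ^ β i) *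
      (starRingEnd ℂ) ((-Complex.I) ^ (∑ i, (α - β) i) * mderiv (α - β) φ (-x))

lemma scalar_decay (t h δ b : ℝ) (ht : 0 < t) (hh : 0 < h) (hδ : 0 < δ)
    (hQ : b + 1 ≤ t / 3 * (δ / h) ^ (1/t : ℝ)) (lam : ℝ) (hlam : 0 < lam) :
    ∃ N : ℕ, (h : ℝ) ^ N * ((N.factorial : ℝ)) ^ t / (lam ^ t * δ) ^ N ≤
      (3 : ℝ) ^ t * Real.exp (-((b+1) * lam)) := by
  set a : ℝ := lam * (δ / h) ^ (1/t : ℝ) with ha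
  have hdh : (0:ℝ) < δ / h := by positivity
  have hap : 0 < a := by positivity
  refine ⟨⌊a/3⌋₊, ?_⟩
  set N := ⌊a/3⌋₊ with hN
  have hN1 : (N : ℝ) ≤ a / 3 := Nat.floor_le (by positivity)
  have hN2 : a / 3 < N + 1 := Nat.lt_floor_add_one _
  have hat : a ^ (t : ℝ) = lam ^ (t:ℝ) * (δ / h) := by
    rw [ha, Real.mul_rpow hlam.le (Real.rpow_nonneg hdh.le _), ← Real.rpow_mul hdh.le,
      one_div_mul_cancel ht.ne', Real.rpow_one]
  have hkey : lam ^ (t:ℝ) * δ = a ^ (t:ℝ) * h := by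
    rw [hat]; field_simp
  have hswap : (a ^ (t:ℝ)) ^ N = (a ^ N) ^ (t:ℝ) := by
    rw [← Real.rpow_natCast (a ^ (t:ℝ)) N, ← Real.rpow_natCast a N,
      ← Real.rpow_mul hap.le, ← Real.rpow_mul hap.le, mul_comm]
  have hLHS : (h : ℝ) ^ N * ((N.factorial : ℝ)) ^ t / (lam ^ t * δ) ^ N
      = ((N.factorial : ℝ) / a ^ N) ^ (t:ℝ) := by
    rw [hkey, Real.div_rpow (by positivity) (by positivity), mul_pow, hswap]
    have h1 : ((a:ℝ) ^ N) ^ (t:ℝ) ≠ 0 := by positivity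
    field_simp
  rw [hLHS]
  -- core estimate : N!/a^N ≤ 3 * exp(-(a/3))
  have hcore : (N.factorial : ℝ) / a ^ N ≤ 3 * Real.exp (-(a/3)) := by
    have h1 : (N.factorial : ℝ) ≤ (a/3) ^ N := by
      calc (N.factorial : ℝ) ≤ (N : ℝ) ^ N := by exact_mod_cast Nat.factorial_le_pow N
        _ ≤ (a/3) ^ N := pow_le_pow_left₀ (by positivity) hN1 N
    have h2 : (N.factorial : ℝ) / a ^ N ≤ (1/3 : ℝ) ^ N := by
      rw [div_le_iff₀ (by positivity)]
      calc (N.factorial : ℝ) ≤ (a/3) ^ N := h1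
        _ = (1/3:ℝ)^N * a ^ N := by rw [← mul_pow]; ring_nf
    refine h2.trans ?_
    have h3 : (1/3 : ℝ) ^ N ≤ Real.exp (-(N:ℝ)) := by
      calc (1/3:ℝ)^N ≤ (Real.exp (-1)) ^ N := by
            refine pow_le_pow_left₀ (by norm_num) ?_ N
            have he3 : Real.exp 1 ≤ 3 := le_of_lt (lt_trans Real.exp_one_lt_d9 (by norm_num))
            rw [Real.exp_neg, le_inv_comm₀ (by norm_num) (Real.exp_pos 1)]
            norm_num; exact he3
        _ = Real.exp (-(N:ℝ)) := by
            rw [← Real.exp_nat_mul]; ring_nf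
    refine h3.trans ?_
    have h4 : -(N:ℝ) ≤ 1 - a/3 := by linarith
    calc Real.exp (-(N:ℝ)) ≤ Real.exp (1 - a/3) := Real.exp_le_exp.2 h4
      _ = Real.exp 1 * Real.exp (-(a/3)) := by rw [← Real.exp_add]; ring_nf
      _ ≤ 3 * Real.exp (-(a/3)) := by
          have := Real.exp_one_lt_d9
          nlinarith [Real.exp_pos (-(a/3))]
  calc ((N.factorial : ℝ) / a ^ N) ^ (t:ℝ) ≤ (3 * Real.exp (-(a/3))) ^ (t:ℝ) :=
        Real.rpow_le_rpow (by positivity) hcore ht.le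
    _ = (3:ℝ)^(t:ℝ) * Real.exp (-(a/3)*t) := by
        rw [Real.mul_rpow (by norm_num) (Real.exp_pos _).le, Real.exp_mul]
    _ ≤ (3:ℝ)^(t:ℝ) * Real.exp (-((b+1)*lam)) := by
        have : (b+1)*lam ≤ a/3*t := by
          have : t / 3 * (δ / h) ^ (1/t : ℝ) * lam ≤ a / 3 * t := le_of_eq (by rw [ha]; ring)
          nlinarith [hQ, hlam]
        gcongr
        linarith

lemma term_norm_le {d : ℕ} (c : (Fin d → ℕ) → ℂ) (φ : EuclideanSpace ℝ (Fin d) → ℂ)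
    (x ξ : EuclideanSpace ℝ (Fin d)) (α : Fin d → ℕ) :
    ‖diracSeriesTerm c φ x ξ α‖ ≤ ‖c α‖ * ∑ β ∈ Finset.Iic α,
      (∏ i, ((α i).choose (β i) : ℝ)) * (∏ i, |ξ i| ^ β i) * ‖mderiv (α - β) φ (-x)‖ := by
  rw [diracSeriesTerm, norm_mul]
  refine mul_le_mul_of_nonneg_left ((norm_sum_le _ _).trans ?_) (norm_nonneg _)
  refine Finset.sum_le_sum fun β hβ => le_of_eq ?_
  rw [norm_mul, norm_mul, RCLike.norm_conj, norm_mul, norm_pow, norm_neg, Complex.norm_I,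
    one_pow, one_mul, norm_prod, norm_prod]
  simp [Real.norm_eq_abs, abs_pow]

lemma choose_le_two_pow' (n k : ℕ) : n.choose k ≤ 2 ^ n := by
  rcases le_or_gt k n with h | h
  · calc n.choose k ≤ ∑ m ∈ Finset.range (n+1), n.choose m :=
        Finset.single_le_sum (fun _ _ => Nat.zero_le _) (Finset.mem_range.2 (by omega))
      _ = 2^n := Nat.sum_range_choose n
  · simp [Nat.choose_eq_zero_of_lt h, Nat.one_le_two_pow]

lemma term_bound {d : ℕ} (c : (Fin d → ℕ) → ℂ) (φ : EuclideanSpace ℝ (Fin d) → ℂ)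
    (x ξ : EuclideanSpace ℝ (Fin d)) (α : Fin d → ℕ) (s : ℝ) (hs : 0 ≤ s)
    (K E D h : ℝ) (hK : 1 ≤ K) (hh0 : 0 ≤ h) (hh1 : h ≤ 1) (hE : 0 ≤ E) (hD : 0 ≤ D)
    (hξ : ∀ β : Fin d → ℕ, β ≤ α →
      ∏ i, |ξ i| ^ β i ≤ E * K ^ (∑ i, β i) * ((∏ i, Nat.factorial (β i) : ℕ) : ℝ) ^ s)
    (hder : ∀ γ : Fin d → ℕ, γ ≤ α →
      ‖mderiv γ φ (-x)‖ ≤ D * h ^ (∑ i, γ i) * ((∏ i, Nat.factorial (γ i) : ℕ) : ℝ) ^ s) :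
    ‖diracSeriesTerm c φ x ξ α‖ ≤
      ‖c α‖ * (E * D * (4*K) ^ (∑ i, α i) * ((∏ i, Nat.factorial (α i) : ℕ) : ℝ) ^ s) := by
  refine (term_norm_le c φ x ξ α).trans ?_
  refine mul_le_mul_of_nonneg_left ?_ (norm_nonneg _)
  have hcard : ((Finset.Iic α).card : ℝ) ≤ 2 ^ (∑ i, α i) := by
    have : (Finset.Iic α).card ≤ 2 ^ (∑ i, α i) := by
      rw [Pi.card_Iic]
      simp only [Nat.card_Iic]
      calc ∏ i, (α i + 1) ≤ ∏ i, 2 ^ (α i) :=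
            Finset.prod_le_prod (fun _ _ => Nat.zero_le _) (fun i _ => (Nat.lt_two_pow_self (n := α i)))
        _ = 2 ^ (∑ i, α i) := by rw [Finset.prod_pow_eq_pow_sum]
    exact_mod_cast this
  have hB : ∀ β ∈ Finset.Iic α,
      (∏ i, ((α i).choose (β i) : ℝ)) * (∏ i, |ξ i| ^ β i) * ‖mderiv (α - β) φ (-x)‖ ≤
      2 ^ (∑ i, α i) * (E * D * K ^ (∑ i, α i) * ((∏ i, Nat.factorial (α i) : ℕ) : ℝ) ^ s) := by
    intro β hβ
    rw [Finset.mem_Iic] at hβ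
    have hβα : ∀ i, β i ≤ α i := fun i => hβ i
    have h1 : (∏ i, ((α i).choose (β i) : ℝ)) ≤ 2 ^ (∑ i, α i) := by
      calc (∏ i, ((α i).choose (β i) : ℝ)) ≤ ∏ i, (2:ℝ) ^ (α i) := by
            refine Finset.prod_le_prod (fun _ _ => by positivity) (fun i _ => ?_)
            exact_mod_cast choose_le_two_pow' (α i) (β i)
        _ = 2 ^ (∑ i, α i) := by rw [Finset.prod_pow_eq_pow_sum]
    have h2 := hξ β hβ
    have h3 := hder (α - β) (by intro i; simp [Pi.sub_apply])
    -- combine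
    have hKβ : K ^ (∑ i, β i) ≤ K ^ (∑ i, α i) :=
      pow_le_pow_right₀ hK (Finset.sum_le_sum fun i _ => hβα i)
    have hhγ : h ^ (∑ i, (α - β) i) ≤ 1 := pow_le_one₀ hh0 hh1
    have hfact : ((∏ i, Nat.factorial (β i) : ℕ) : ℝ) ^ s *
        ((∏ i, Nat.factorial ((α - β) i) : ℕ) : ℝ) ^ s ≤
        ((∏ i, Nat.factorial (α i) : ℕ) : ℝ) ^ s := by
      rw [← Real.mul_rpow (by positivity) (by positivity)]
      refine Real.rpow_le_rpow (by positivity) ?_ hs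
      rw [← Nat.cast_mul, ← Finset.prod_mul_distrib]
      have : (∏ i, Nat.factorial (β i) * Nat.factorial ((α - β) i)) ≤ ∏ i, Nat.factorial (α i) := by
        refine Finset.prod_le_prod (fun _ _ => Nat.zero_le _) (fun i _ => ?_)
        have : (β i).factorial * ((α i) - (β i)).factorial ∣ (α i).factorial :=
          Nat.factorial_mul_factorial_dvd_factorial (hβα i)
        simpa [Pi.sub_apply] using Nat.le_of_dvd (Nat.factorial_pos _) this
      exact_mod_cast this
    have hξnn : (0:ℝ) ≤ ∏ i, |ξ i| ^ β i := by positivity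
    calc (∏ i, ((α i).choose (β i) : ℝ)) * (∏ i, |ξ i| ^ β i) * ‖mderiv (α - β) φ (-x)‖
        ≤ 2 ^ (∑ i, α i) * ((E * K ^ (∑ i, β i) * ((∏ i, Nat.factorial (β i) : ℕ) : ℝ) ^ s) *
          (D * h ^ (∑ i, (α - β) i) * ((∏ i, Nat.factorial ((α - β) i) : ℕ) : ℝ) ^ s)) := by
          have hmn : (0:ℝ) ≤ ‖mderiv (α - β) φ (-x)‖ := norm_nonneg _
          have := mul_le_mul (mul_le_mul h1 h2 hξnn (by positivity)) h3 hmn (by positivity)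
          calc _ ≤ (2 ^ (∑ i, α i) * (E * K ^ (∑ i, β i) * ((∏ i, Nat.factorial (β i) : ℕ) : ℝ) ^ s)) *
              (D * h ^ (∑ i, (α - β) i) * ((∏ i, Nat.factorial ((α - β) i) : ℕ) : ℝ) ^ s) := this
            _ = _ := by ring
      _ ≤ 2 ^ (∑ i, α i) * (E * D * K ^ (∑ i, α i) * ((∏ i, Nat.factorial (α i) : ℕ) : ℝ) ^ s) := by
          refine mul_le_mul_of_nonneg_left ?_ (by positivity)
          have e1 : (E * K ^ (∑ i, β i) * ((∏ i, Nat.factorial (β i) : ℕ) : ℝ) ^ s) *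
              (D * h ^ (∑ i, (α - β) i) * ((∏ i, Nat.factorial ((α - β) i) : ℕ) : ℝ) ^ s)
              = E * D * (K ^ (∑ i, β i) * h ^ (∑ i, (α - β) i)) *
                (((∏ i, Nat.factorial (β i) : ℕ) : ℝ) ^ s *
                 ((∏ i, Nat.factorial ((α - β) i) : ℕ) : ℝ) ^ s) := by ring
          rw [e1]
          have e2 : K ^ (∑ i, β i) * h ^ (∑ i, (α - β) i) ≤ K ^ (∑ i, α i) := by
            calc K ^ (∑ i, β i) * h ^ (∑ i, (α - β) i) ≤ K ^ (∑ i, α i) * 1 :=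
                mul_le_mul hKβ hhγ (by positivity) (by positivity)
              _ = K ^ (∑ i, α i) := mul_one _
          exact mul_le_mul (mul_le_mul_of_nonneg_left e2 (by positivity)) hfact
                  (by positivity) (by positivity)
  calc ∑ β ∈ Finset.Iic α,
        (∏ i, ((α i).choose (β i) : ℝ)) * (∏ i, |ξ i| ^ β i) * ‖mderiv (α - β) φ (-x)‖
      ≤ ∑ β ∈ Finset.Iic α, 2 ^ (∑ i, α i) *
          (E * D * K ^ (∑ i, α i) * ((∏ i, Nat.factorial (α i) : ℕ) : ℝ) ^ s) :=
        Finset.sum_le_sum hB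
    _ = (Finset.Iic α).card * (2 ^ (∑ i, α i) *
          (E * D * K ^ (∑ i, α i) * ((∏ i, Nat.factorial (α i) : ℕ) : ℝ) ^ s)) := by
        rw [Finset.sum_const, nsmul_eq_mul]
    _ ≤ 2 ^ (∑ i, α i) * (2 ^ (∑ i, α i) *
          (E * D * K ^ (∑ i, α i) * ((∏ i, Nat.factorial (α i) : ℕ) : ℝ) ^ s)) := by
        refine mul_le_mul_of_nonneg_right hcard (by positivity)
    _ = E * D * (4*K) ^ (∑ i, α i) * ((∏ i, Nat.factorial (α i) : ℕ) : ℝ) ^ s := by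
        rw [show (4:ℝ)*K = 2*(2*K) by ring, mul_pow, mul_pow]
        ring

/-- If `∑_α |c_α| r^{|α|} (α!)^s < ∞` for every `r > 0` and `φ ∈ Σ_t^s(ℝ^d)`, then
(1) the series `F(x,ξ) = ∑_α c_α ∑_{β≤α} binom(α,β) ξ^β conj((D^{α-β}φ)(-x))`
(which is `(2π)^{d/2} V_φ u` for `u = ∑_α c_α D^α δ₀`) converges absolutely, and
(2) for every `(x₀,ξ₀)` with `x₀ ≠ 0` there is an open neighborhood `U` on which `F`
decays super-exponentially along anisotropic dilations; i.e.
`WF^{t,s}(u) ⊆ {0} × (ℝ^d ∖ 0)`. -/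
theorem dirac_series_wavefront (d : ℕ) (s t : ℝ) (hs : 0 < s) (ht : 0 < t)
    (c : (Fin d → ℕ) → ℂ)
    (hc : ∀ r : ℝ, 0 < r → Summable (fun α : Fin d → ℕ =>
      ‖c α‖ * r ^ (∑ i, α i) * ((∏ i, Nat.factorial (α i) : ℕ) : ℝ) ^ s))
    (φ : EuclideanSpace ℝ (Fin d) → ℂ) (hφ : ContDiff ℝ (⊤ : ℕ∞) φ)
    (hGS : ∀ h : ℝ, 0 < h → ∃ C : ℝ, 0 < C ∧
      ∀ (α β : Fin d → ℕ) (x : EuclideanSpace ℝ (Fin d)),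
        |∏ i, x i ^ α i| * ‖mderiv β φ x‖ ≤
          C * h ^ ((∑ i, α i) + (∑ i, β i)) * ((∏ i, Nat.factorial (α i) : ℕ) : ℝ) ^ t *
            ((∏ i, Nat.factorial (β i) : ℕ) : ℝ) ^ s) :
    (∀ x ξ : EuclideanSpace ℝ (Fin d),
      Summable (fun α : Fin d → ℕ => ‖diracSeriesTerm c φ x ξ α‖)) ∧
    (∀ x₀ ξ₀ : EuclideanSpace ℝ (Fin d), x₀ ≠ 0 →
      ∃ U : Set (EuclideanSpace ℝ (Fin d) × EuclideanSpace ℝ (Fin d)),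
        IsOpen U ∧ (x₀, ξ₀) ∈ U ∧
        ∀ r : ℝ, 0 < r → ∃ C : ℝ, ∀ lam : ℝ, 0 < lam → ∀ p ∈ U,
          Real.exp (r * lam) *
            ‖∑' α : Fin d → ℕ, diracSeriesTerm c φ (lam ^ t • p.1) (lam ^ s • p.2) α‖ ≤ C) := by
  have part1 : ∀ x ξ : EuclideanSpace ℝ (Fin d),
      Summable (fun α : Fin d → ℕ => ‖diracSeriesTerm c φ x ξ α‖) := by
    intro x ξ
    obtain ⟨C, hC, hbound⟩ := hGS 1 one_pos
    set K : ℝ := 1 + ∑ j, |ξ j| with hKdef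
    have hK : 1 ≤ K := le_add_of_nonneg_right (Finset.sum_nonneg fun _ _ => abs_nonneg _)
    have hξK : ∀ j, |ξ j| ≤ K := by
      intro j
      have : |ξ j| ≤ ∑ j', |ξ j'| :=
        Finset.single_le_sum (f := fun j' => |ξ j'|) (fun _ _ => abs_nonneg _) (Finset.mem_univ j)
      linarith
    have hterm : ∀ α : Fin d → ℕ, ‖diracSeriesTerm c φ x ξ α‖ ≤
        C * (‖c α‖ * (4*K) ^ (∑ i, α i) * ((∏ i, Nat.factorial (α i) : ℕ) : ℝ) ^ s) := by
      intro α
      have hb := term_bound c φ x ξ α s hs.le K 1 C 1 hK zero_le_one le_rfl zero_le_one hC.le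
        (fun β _ => ?_) (fun γ _ => ?_)
      · exact hb.trans (le_of_eq (by ring))
      · -- ξ bound
        have h1 : ∏ i, |ξ i| ^ β i ≤ ∏ i, K ^ β i :=
          Finset.prod_le_prod (fun _ _ => by positivity)
            (fun i _ => pow_le_pow_left₀ (abs_nonneg _) (hξK i) _)
        have h2 : (∏ i, K ^ β i) = K ^ (∑ i, β i) := Finset.prod_pow_eq_pow_sum _ _ _
        have h3 : (1:ℝ) ≤ ((∏ i, Nat.factorial (β i) : ℕ) : ℝ) ^ s := by
          refine Real.one_le_rpow ?_ hs.le
          exact_mod_cast Nat.one_le_iff_ne_zero.2 (Finset.prod_ne_zero_iff.2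
            fun i _ => (Nat.factorial_pos _).ne')
        calc ∏ i, |ξ i| ^ β i ≤ K ^ (∑ i, β i) := h1.trans_eq h2
          _ = 1 * K ^ (∑ i, β i) * 1 := by ring
          _ ≤ 1 * K ^ (∑ i, β i) * ((∏ i, Nat.factorial (β i) : ℕ) : ℝ) ^ s := by
              refine mul_le_mul_of_nonneg_left h3 (by positivity)
      · -- derivative bound
        have h0 := hbound 0 γ (-x)
        simp only [Pi.zero_apply, pow_zero, Finset.prod_const_one, abs_one, one_mul,
          Finset.sum_const_zero, zero_add, Nat.factorial_zero, Nat.cast_one, Real.one_rpow,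
          one_pow, mul_one] at h0 ⊢
        exact h0
    refine Summable.of_nonneg_of_le (fun _ => norm_nonneg _) hterm ?_
    exact ((hc (4*K) (by linarith)).mul_left C)
  refine ⟨part1, ?_⟩
  intro x₀ ξ₀ hx₀
  obtain ⟨i, hi⟩ : ∃ i, x₀ i ≠ 0 := by
    by_contra hcon; push_neg at hcon
    exact hx₀ (by ext j; simpa using hcon j)
  set δ : ℝ := |x₀ i| / 2 with hδdef
  have hδ : 0 < δ := half_pos (abs_pos.2 hi)
  set M : ℝ := 1 + ∑ j, |ξ₀ j| with hMdef
  have hM1 : 1 ≤ M := le_add_of_nonneg_right (Finset.sum_nonneg fun _ _ => abs_nonneg _)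
  refine ⟨{p | δ < |p.1 i|} ∩ {p | ∑ j, |p.2 j| < M}, ?_, ?_, ?_⟩
  · refine IsOpen.inter ?_ ?_
    · exact isOpen_lt continuous_const
        (((EuclideanSpace.proj i).continuous.comp continuous_fst).abs)
    · exact isOpen_lt (continuous_finset_sum _ fun j _ =>
        ((EuclideanSpace.proj j).continuous.comp continuous_snd).abs) continuous_const
  · constructor
    · show δ < |x₀ i|
      rw [hδdef]; have := abs_pos.2 hi; linarith
    · show ∑ j, |ξ₀ j| < M
      rw [hMdef]; linarith
  · intro r hr
    set Q : ℝ := max 1 (3*(r + s*d + 1)/t) with hQdef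
    have hQ1 : 1 ≤ Q := le_max_left _ _
    have hQ0 : 0 < Q := lt_of_lt_of_le one_pos hQ1
    have hQt : 0 < Q ^ (t:ℝ) := Real.rpow_pos_of_pos hQ0 t
    set h : ℝ := min 1 (δ / Q ^ (t:ℝ)) with hhdef
    have hh0 : 0 < h := lt_min one_pos (div_pos hδ hQt)
    have hh1 : h ≤ 1 := min_le_left _ _
    have hQcond : r + s*d + 1 ≤ t/3 * (δ/h) ^ (1/t:ℝ) := by
      have h1 : Q ^ (t:ℝ) ≤ δ / h := by
        rw [le_div_iff₀ hh0]
        calc Q ^ (t:ℝ) * h ≤ Q ^ (t:ℝ) * (δ / Q ^ (t:ℝ)) :=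
              mul_le_mul_of_nonneg_left (min_le_right _ _) hQt.le
          _ = δ := by field_simp
      have h2 : Q ≤ (δ/h)^(1/t:ℝ) := by
        calc Q = (Q ^ (t:ℝ)) ^ (1/t:ℝ) := by
              rw [← Real.rpow_mul hQ0.le, mul_one_div, div_self ht.ne', Real.rpow_one]
          _ ≤ (δ/h)^(1/t:ℝ) := Real.rpow_le_rpow hQt.le h1 (by positivity)
      have h3 : 3*(r + s*d + 1)/t ≤ Q := le_max_right _ _
      calc r + s*d + 1 = t/3 * (3*(r + s*d + 1)/t) := by field_simp
        _ ≤ t/3 * Q := mul_le_mul_of_nonneg_left h3 (by positivity)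
        _ ≤ t/3 * (δ/h)^(1/t:ℝ) := mul_le_mul_of_nonneg_left h2 (by positivity)
    obtain ⟨C₀, hC₀, hbound⟩ := hGS h hh0
    set S : ℝ := ∑' α : Fin d → ℕ,
      ‖c α‖ * (4*M) ^ (∑ i, α i) * ((∏ i, Nat.factorial (α i) : ℕ) : ℝ) ^ s with hSdef
    have hSnn : 0 ≤ S := tsum_nonneg (fun α => by positivity)
    refine ⟨3 ^ (t:ℝ) * C₀ * S, ?_⟩
    intro lam hlam p hp
    obtain ⟨hp1, hp2⟩ := hp
    simp only [Set.mem_setOf_eq] at hp1 hp2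
    obtain ⟨N, hN⟩ := scalar_decay t h δ (r + s*d) ht hh0 hδ hQcond lam hlam
    set X : ℝ := h ^ N * ((N.factorial : ℝ)) ^ t / (lam ^ t * δ) ^ N with hXdef
    have hXnn : 0 ≤ X := by positivity
    set E : ℝ := Real.exp (s * d * lam) with hEdef
    have hlt : 0 < lam ^ (t:ℝ) := Real.rpow_pos_of_pos hlam t
    have hls : 0 < lam ^ (s:ℝ) := Real.rpow_pos_of_pos hlam s
    have hterm : ∀ α : Fin d → ℕ, ‖diracSeriesTerm c φ (lam ^ t • p.1) (lam ^ s • p.2) α‖ ≤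
        (E * (C₀ * X)) *
          (‖c α‖ * (4*M) ^ (∑ i, α i) * ((∏ i, Nat.factorial (α i) : ℕ) : ℝ) ^ s) := by
      intro α
      have hb := term_bound c φ (lam ^ t • p.1) (lam ^ s • p.2) α s hs.le M E (C₀ * X) h hM1
        hh0.le hh1 (Real.exp_pos _).le (by positivity) (fun β _ => ?_) (fun γ _ => ?_)
      · exact hb.trans (le_of_eq (by ring))
      · -- ξ bound at scaled point
        have e0 : ∀ j, |(lam ^ (s:ℝ) • p.2) j| = lam ^ (s:ℝ) * |p.2 j| := by
          intro j
          simp [PiLp.smul_apply, abs_mul, abs_of_pos hls]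
        have e1 : ∏ j, |(lam ^ (s:ℝ) • p.2) j| ^ β j
            = (lam ^ (s:ℝ)) ^ (∑ j, β j) * ∏ j, |p.2 j| ^ β j := by
          simp_rw [e0, mul_pow]
          rw [Finset.prod_mul_distrib, Finset.prod_pow_eq_pow_sum]
        have e2 : ∏ j, |p.2 j| ^ β j ≤ M ^ (∑ j, β j) := by
          have hle : ∀ j, |p.2 j| ≤ M := by
            intro j
            have : |p.2 j| ≤ ∑ j', |p.2 j'| :=
              Finset.single_le_sum (f := fun j' => |p.2 j'|) (fun _ _ => abs_nonneg _)
                (Finset.mem_univ j)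
            linarith
          calc ∏ j, |p.2 j| ^ β j ≤ ∏ j, M ^ β j :=
                Finset.prod_le_prod (fun _ _ => by positivity)
                  (fun j _ => pow_le_pow_left₀ (abs_nonneg _) (hle j) _)
            _ = M ^ (∑ j, β j) := Finset.prod_pow_eq_pow_sum _ _ _
        have e3 : (lam ^ (s:ℝ)) ^ (∑ j, β j) ≤
            E * ((∏ j, Nat.factorial (β j) : ℕ) : ℝ) ^ s := by
          have f1 : (lam ^ (s:ℝ)) ^ (∑ j, β j) = (lam ^ (∑ j, β j)) ^ (s:ℝ) := by
            rw [← Real.rpow_natCast (lam ^ (s:ℝ)) _, ← Real.rpow_mul hlam.le, mul_comm,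
              Real.rpow_mul hlam.le, Real.rpow_natCast]
          have f2 : lam ^ (∑ j, β j) ≤ ((∏ j, Nat.factorial (β j) : ℕ) : ℝ) *
              Real.exp (d * lam) := by
            calc lam ^ (∑ j, β j) = ∏ j, lam ^ β j := (Finset.prod_pow_eq_pow_sum _ _ _).symm
              _ ≤ ∏ j, (((β j).factorial : ℝ) * Real.exp lam) := by
                  refine Finset.prod_le_prod (fun _ _ => by positivity) (fun j _ => ?_)
                  have h5 := Real.pow_div_factorial_le_exp lam hlam.le (β j)
                  rw [div_le_iff₀ (by positivity)] at h5
                  linarith [h5]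
              _ = ((∏ j, Nat.factorial (β j) : ℕ) : ℝ) * Real.exp lam ^ d := by
                  rw [Finset.prod_mul_distrib, Finset.prod_const, Finset.card_univ,
                    Fintype.card_fin]
                  push_cast; ring
              _ = ((∏ j, Nat.factorial (β j) : ℕ) : ℝ) * Real.exp (d * lam) := by
                  rw [← Real.exp_nat_mul]
          calc (lam ^ (s:ℝ)) ^ (∑ j, β j) = (lam ^ (∑ j, β j)) ^ (s:ℝ) := f1
            _ ≤ (((∏ j, Nat.factorial (β j) : ℕ) : ℝ) * Real.exp (d * lam)) ^ (s:ℝ) :=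
                Real.rpow_le_rpow (by positivity) f2 hs.le
            _ = ((∏ j, Nat.factorial (β j) : ℕ) : ℝ) ^ (s:ℝ) * Real.exp (d * lam) ^ (s:ℝ) :=
                Real.mul_rpow (by positivity) (Real.exp_pos _).le
            _ = E * ((∏ j, Nat.factorial (β j) : ℕ) : ℝ) ^ s := by
                rw [← Real.exp_mul, hEdef]
                ring_nf
        calc ∏ j, |(lam ^ (s:ℝ) • p.2) j| ^ β j
            = (lam ^ (s:ℝ)) ^ (∑ j, β j) * ∏ j, |p.2 j| ^ β j := e1
          _ ≤ (E * ((∏ j, Nat.factorial (β j) : ℕ) : ℝ) ^ s) * M ^ (∑ j, β j) := by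
              refine mul_le_mul e3 e2 (by positivity) (by positivity)
          _ = E * M ^ (∑ j, β j) * ((∏ j, Nat.factorial (β j) : ℕ) : ℝ) ^ s := by ring
      · -- derivative bound at scaled point
        set y : EuclideanSpace ℝ (Fin d) := -(lam ^ (t:ℝ) • p.1) with hydef
        have hyi : |y i| = lam ^ (t:ℝ) * |p.1 i| := by
          simp [hydef, PiLp.smul_apply, abs_mul, abs_of_pos hlt]
        have hyδ : lam ^ (t:ℝ) * δ ≤ |y i| := by
          rw [hyi]
          exact mul_le_mul_of_nonneg_left hp1.le hlt.le
        have hb2 := hbound (fun j => if j = i then N else 0) γ y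
        have eprod : ∏ j, y j ^ (if j = i then N else 0) = y i ^ N := by
          rw [Finset.prod_eq_single i (fun j _ hj => by simp [hj]) (by simp)]
          simp
        have esum : (∑ j, if j = i then N else 0) = N := by
          simp [Finset.sum_ite_eq']
        have efact : (∏ j, Nat.factorial (if j = i then N else 0)) = N.factorial := by
          rw [Finset.prod_eq_single i (fun j _ hj => by simp [hj]) (by simp)]
          simp
        rw [eprod, esum, efact] at hb2
        have hyN : (lam ^ (t:ℝ) * δ) ^ N * ‖mderiv γ φ y‖ ≤
            C₀ * h ^ (N + ∑ i, γ i) * ((N.factorial : ℝ)) ^ t *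
              ((∏ i, Nat.factorial (γ i) : ℕ) : ℝ) ^ s := by
          refine le_trans ?_ hb2
          rw [abs_pow]
          exact mul_le_mul_of_nonneg_right (pow_le_pow_left₀ (by positivity) hyδ N)
            (norm_nonneg _)
        have hpos : (0:ℝ) < (lam ^ (t:ℝ) * δ) ^ N := by positivity
        have := (le_div_iff₀' hpos).2 hyN
        refine this.trans (le_of_eq ?_)
        rw [hXdef, pow_add, div_eq_mul_inv]
        ring
    have hsum := part1 (lam ^ (t:ℝ) • p.1) (lam ^ (s:ℝ) • p.2)
    have hsb : Summable (fun α : Fin d → ℕ => (E * (C₀ * X)) *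
        (‖c α‖ * (4*M) ^ (∑ i, α i) * ((∏ i, Nat.factorial (α i) : ℕ) : ℝ) ^ s)) :=
      (hc (4*M) (by linarith)).mul_left _
    have htsum : ‖∑' α : Fin d → ℕ, diracSeriesTerm c φ (lam ^ t • p.1) (lam ^ s • p.2) α‖ ≤
        (E * (C₀ * X)) * S := by
      refine (norm_tsum_le_tsum_norm hsum).trans ?_
      calc ∑' α : Fin d → ℕ, ‖diracSeriesTerm c φ (lam ^ t • p.1) (lam ^ s • p.2) α‖
          ≤ ∑' α : Fin d → ℕ, (E * (C₀ * X)) *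
            (‖c α‖ * (4*M) ^ (∑ i, α i) * ((∏ i, Nat.factorial (α i) : ℕ) : ℝ) ^ s) :=
            hsum.tsum_le_tsum hterm hsb
        _ = (E * (C₀ * X)) * S := by rw [hSdef, tsum_mul_left]
    have hexp : Real.exp (r*lam) * (E * Real.exp (-((r+s*d+1)*lam))) ≤ 1 := by
      rw [hEdef, ← Real.exp_add, ← Real.exp_add]
      rw [show r*lam + (s*d*lam + -((r+s*d+1)*lam)) = -lam by ring]
      exact Real.exp_le_one_iff.2 (by linarith)
    calc Real.exp (r * lam) *
          ‖∑' α : Fin d → ℕ, diracSeriesTerm c φ (lam ^ t • p.1) (lam ^ s • p.2) α‖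
        ≤ Real.exp (r * lam) * ((E * (C₀ * X)) * S) :=
          mul_le_mul_of_nonneg_left htsum (Real.exp_pos _).le
      _ ≤ Real.exp (r * lam) * ((E * (C₀ * (3 ^ (t:ℝ) * Real.exp (-((r+s*d+1)*lam))))) * S) := by
          have : X ≤ 3 ^ (t:ℝ) * Real.exp (-((r + s*d + 1) * lam)) := by
            refine le_trans (le_of_eq hXdef) (hN.trans (le_of_eq ?_))
            ring_nf
          gcongr
      _ = (3 ^ (t:ℝ) * C₀ * S) * (Real.exp (r*lam) * (E * Real.exp (-((r+s*d+1)*lam)))) := by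
          ring
      _ ≤ (3 ^ (t:ℝ) * C₀ * S) * 1 := mul_le_mul_of_nonneg_left hexp (by positivity)
      _ = 3 ^ (t:ℝ) * C₀ * S := mul_one _
end

section
/- Let s > 1 and let w, g : ℝ^d → [0, ∞) be measurable. Assume: (a) there exist C₀, a > 0 such that w(ξ) ≤ C₀ e^{a |ξ|^{1/s}} for all ξ ∈ ℝ^d; (b) Γ₂ ⊆ ℝ^d ∖ {0} is an open cone (closed under multiplication by positive scalars) such that for every r > 0 the supremum over ξ ∈ Γ₂ of e^{r |ξ|^{1/s}} w(ξ) is finite; (c) for every r > 0 there exists C_r > 0 with g(ξ) ≤ C_r e^{−r |ξ|^{1/s}} for all ξ. Let ξ₀ ∈ Γ₂ and let ε > 0 satisfy ε ≤ |ξ₀|/2 and ξ₀ + B_{2ε} ⊆ Γ₂ (B_{2ε} the open ball of radius 2ε). Then for every r > 0 the supremum over λ > 0 and ξ ∈ B_ε of e^{r λ} (w * g)(λ^s (ξ₀ + ξ)) is finite, where (w * g)(ζ) = ∫_{ℝ^d} w(ζ − η) g(η) dη. (This is the analytic core of the inclusion WF^{t,s}(u) ⊆ {0} × π₂ WF_s(u)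 for compactly supported Gevrey ultradistributions: w plays the role of |û| and g of |φ̂(−·)| for a Gevrey window φ.) -/
set_option maxHeartbeats 1000000

open MeasureTheory

private lemma rpow_subadd {x y p : ℝ} (hx : 0 ≤ x) (hy : 0 ≤ y) (hp : 0 ≤ p) (hp1 : p ≤ 1) :
    (x + y) ^ p ≤ x ^ p + y ^ p := by
  have h := NNReal.rpow_add_le_add_rpow x.toNNReal y.toNNReal hp hp1
  have := NNReal.coe_le_coe.mpr h
  simpa [NNReal.coe_rpow, Real.coe_toNNReal x hx, Real.coe_toNNReal y hy] using this

private lemma poly_exp_bound {b p : ℝ} (hb : 0 < b) (hp : 0 < p) (m : ℝ) (hm : 0 < m) :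
    ∃ C : ℝ, 0 < C ∧ ∀ t : ℝ, 0 ≤ t → (1 + t) ^ m * Real.exp (-b * t ^ p) ≤ C := by
  set q := m / p with hq
  have hq0 : 0 < q := div_pos hm hp
  refine ⟨2 ^ m * Real.exp (b - q + q * Real.log (q / b)), by positivity, fun t ht => ?_⟩
  set u := t ^ p with hu
  have hu0 : 0 ≤ u := Real.rpow_nonneg ht p
  have h1u : (1 : ℝ) ≤ (1 + u) ^ (1 / p) := by
    calc (1 : ℝ) = 1 ^ (1 / p) := (Real.one_rpow _).symm
      _ ≤ (1 + u) ^ (1 / p) := Real.rpow_le_rpow zero_le_one (by linarith) (by positivity)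
  have h1 : 1 + t ≤ 2 * (1 + u) ^ (1 / p) := by
    rcases le_total t 1 with h | h
    · linarith
    · have ht' : t ≤ (1 + u) ^ (1 / p) := by
        calc t = (t ^ p) ^ (1 / p) := by rw [one_div, Real.rpow_rpow_inv ht hp.ne']
          _ ≤ (1 + u) ^ (1 / p) :=
            Real.rpow_le_rpow (Real.rpow_nonneg ht p) (by linarith) (by positivity)
      linarith
  have h2 : (1 + t) ^ m ≤ 2 ^ m * (1 + u) ^ q := by
    calc (1 + t) ^ m ≤ (2 * (1 + u) ^ (1 / p)) ^ m :=
          Real.rpow_le_rpow (by linarith) h1 hm.le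
      _ = 2 ^ m * ((1 + u) ^ (1 / p)) ^ m :=
          Real.mul_rpow (by norm_num) (Real.rpow_nonneg (by linarith) _)
      _ = 2 ^ m * (1 + u) ^ q := by
          rw [← Real.rpow_mul (by linarith), one_div, inv_mul_eq_div, hq]
  have h3 : (1 + u) ^ q ≤ Real.exp (b * u + (b - q + q * Real.log (q / b))) := by
    have hpos : (0 : ℝ) < 1 + u := by linarith
    rw [Real.rpow_def_of_pos hpos]
    apply Real.exp_le_exp.mpr
    have hlog : Real.log ((1 + u) * (b / q)) ≤ (1 + u) * (b / q) - 1 :=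
      Real.log_le_sub_one_of_pos (by positivity)
    rw [Real.log_mul (by positivity) (by positivity)] at hlog
    have hlogdiv : Real.log (b / q) = -Real.log (q / b) := by
      rw [← Real.log_inv, inv_div]
    rw [hlogdiv] at hlog
    have h4 : Real.log (1 + u) ≤ (1 + u) * (b / q) - 1 + Real.log (q / b) := by linarith
    have h5 := mul_le_mul_of_nonneg_right h4 hq0.le
    have h6 : ((1 + u) * (b / q) - 1 + Real.log (q / b)) * q
        = b * u + (b - q + q * Real.log (q / b)) := by
      field_simp
      ring
    linarith [h6 ▸ h5]
  calc (1 + t) ^ m * Real.exp (-b * t ^ p)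
      ≤ (2 ^ m * (1 + u) ^ q) * Real.exp (-b * u) := by
        exact mul_le_mul_of_nonneg_right h2 (Real.exp_nonneg _)
    _ ≤ (2 ^ m * Real.exp (b * u + (b - q + q * Real.log (q / b)))) * Real.exp (-b * u) := by
        have := mul_le_mul_of_nonneg_left h3 (by positivity : (0:ℝ) ≤ 2 ^ m)
        exact mul_le_mul_of_nonneg_right this (Real.exp_nonneg _)
    _ = 2 ^ m * Real.exp (b - q + q * Real.log (q / b)) := by
        rw [mul_assoc, ← Real.exp_add]
        ring_nf

private lemma integrable_exp_neg_rpow_norm (d : ℕ) {b p : ℝ} (hb : 0 < b) (hp : 0 < p) :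
    Integrable (fun x : EuclideanSpace ℝ (Fin d) => Real.exp (-b * ‖x‖ ^ p)) := by
  obtain ⟨C, hC, hbd⟩ := poly_exp_bound hb hp ((d : ℝ) + 1) (by positivity)
  have hfin : ((Module.finrank ℝ (EuclideanSpace ℝ (Fin d))) : ℝ) < (d : ℝ) + 1 := by
    rw [finrank_euclideanSpace_fin]; linarith
  have hint : Integrable (fun x : EuclideanSpace ℝ (Fin d) => C * (1 + ‖x‖) ^ (-((d : ℝ) + 1))) :=
    (integrable_one_add_norm hfin).const_mul C
  refine hint.mono' ?_ (Filter.Eventually.of_forall fun x => ?_)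
  · refine (Real.continuous_exp.comp ?_).aestronglyMeasurable
    exact continuous_const.mul (continuous_norm.rpow_const fun x => Or.inr hp.le)
  · rw [Real.norm_eq_abs, abs_of_nonneg (Real.exp_nonneg _)]
    have h := hbd ‖x‖ (norm_nonneg x)
    have hpos : (0 : ℝ) < (1 + ‖x‖) ^ ((d : ℝ) + 1) := Real.rpow_pos_of_pos (by positivity) _
    rw [Real.rpow_neg (by positivity), mul_comm C, ← div_eq_inv_mul, le_div_iff₀ hpos]
    nlinarith [h]

/-- Analytic core of `WF^{t,s}(u) ⊆ {0} × π₂ WF_s(u)` for `u ∈ ℰ_s'(ℝ^d)`: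
if `w` (playing the role of `|û|`) has Gevrey-exponential growth, decays
super-exponentially on an open cone `Γ₂ ∋ ξ₀`, and `g` (playing the role of `|φ̂(-·)|`)
decays super-exponentially everywhere, then `w * g` decays super-exponentially along
the dilations `λ ↦ λ^s(ξ₀ + ξ)` for `ξ` in a small ball. -/
theorem gevrey_cone_convolution_decay (d : ℕ) (s : ℝ) (hs : 1 < s)
    (w g : EuclideanSpace ℝ (Fin d) → ℝ)
    (hwmeas : Measurable w) (hgmeas : Measurable g)
    (hw0 : ∀ ξ, 0 ≤ w ξ) (hg0 : ∀ ξ, 0 ≤ g ξ)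
    (ha : ∃ C₀ : ℝ, 0 < C₀ ∧ ∃ a : ℝ, 0 < a ∧ ∀ ξ,
      w ξ ≤ C₀ * Real.exp (a * ‖ξ‖ ^ (1 / s)))
    (Γ₂ : Set (EuclideanSpace ℝ (Fin d))) (hΓopen : IsOpen Γ₂)
    (hΓ0 : (0 : EuclideanSpace ℝ (Fin d)) ∉ Γ₂)
    (hΓcone : ∀ ξ ∈ Γ₂, ∀ a : ℝ, 0 < a → a • ξ ∈ Γ₂)
    (hb : ∀ r : ℝ, 0 < r → ∃ C : ℝ, ∀ ξ ∈ Γ₂, Real.exp (r * ‖ξ‖ ^ (1 / s)) * w ξ ≤ C)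
    (hcg : ∀ r : ℝ, 0 < r → ∃ C : ℝ, 0 < C ∧ ∀ ξ,
      g ξ ≤ C * Real.exp (-r * ‖ξ‖ ^ (1 / s)))
    (ξ₀ : EuclideanSpace ℝ (Fin d)) (hξ₀ : ξ₀ ∈ Γ₂)
    (ε : ℝ) (hε : 0 < ε) (hεle : ε ≤ ‖ξ₀‖ / 2)
    (hball : ∀ ξ : EuclideanSpace ℝ (Fin d), ‖ξ‖ < 2 * ε → ξ₀ + ξ ∈ Γ₂) :
    ∀ r : ℝ, 0 < r → ∃ C : ℝ, ∀ lam : ℝ, 0 < lam →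
      ∀ ξ : EuclideanSpace ℝ (Fin d), ‖ξ‖ < ε →
        Real.exp (r * lam) *
          (∫ η : EuclideanSpace ℝ (Fin d), w (lam ^ s • (ξ₀ + ξ) - η) * g η) ≤ C := by
  intro r hr
  obtain ⟨C₀, hC₀, a, ha', hwa⟩ := ha
  have hs0 : (0 : ℝ) < s := by linarith
  have hp0 : (0 : ℝ) < 1 / s := by positivity
  have hp1 : 1 / s ≤ 1 := by rw [div_le_one hs0]; linarith
  have hξ₀pos : 0 < ‖ξ₀‖ := norm_pos_iff.mpr fun h => hΓ0 (h ▸ hξ₀)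
  set c : ℝ := (‖ξ₀‖ / 4) ^ (1 / s) with hcdef
  have hc : 0 < c := Real.rpow_pos_of_pos (by positivity) _
  obtain ⟨Cb, hCb⟩ := hb (r / c) (by positivity)
  have hCb0 : 0 ≤ Cb := le_trans (mul_nonneg (Real.exp_pos _).le (hw0 ξ₀)) (hCb ξ₀ hξ₀)
  set M : ℝ := (‖ξ₀‖ + ε) ^ (1 / s) with hMdef
  have hM : 0 < M := Real.rpow_pos_of_pos (by positivity) _
  set δ : ℝ := (ε / 2) ^ (1 / s) with hδdef
  have hδ : 0 < δ := Real.rpow_pos_of_pos (by positivity) _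
  set r'' : ℝ := 2 * (a + (r + a * M) / δ) with hr''def
  have hr''pos : 0 < r'' := by positivity
  obtain ⟨C'', hC''pos, hgC⟩ := hcg r'' hr''pos
  obtain ⟨C₁, hC₁pos, hgC₁⟩ := hcg 1 one_pos
  have hgint : Integrable g := by
    refine ((integrable_exp_neg_rpow_norm d one_pos hp0).const_mul C₁).mono'
      hgmeas.aestronglyMeasurable (Filter.Eventually.of_forall fun η => ?_)
    rw [Real.norm_eq_abs, abs_of_nonneg (hg0 η)]
    exact hgC₁ η
  have hEint : Integrable (fun η : EuclideanSpace ℝ (Fin d) =>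
      Real.exp (-(r'' / 2) * ‖η‖ ^ (1 / s))) :=
    integrable_exp_neg_rpow_norm d (by positivity) hp0
  refine ⟨Cb * (∫ η, g η) + C₀ * C'' * (∫ η : EuclideanSpace ℝ (Fin d),
      Real.exp (-(r'' / 2) * ‖η‖ ^ (1 / s))), ?_⟩
  intro lam hlam ξ hξ
  set t : ℝ := lam ^ s with htdef
  have ht : 0 < t := Real.rpow_pos_of_pos hlam s
  have htinv : t ^ (1 / s) = lam := by
    rw [one_div, htdef, Real.rpow_rpow_inv hlam.le (ne_of_gt hs0)]
  have key : ∀ η, w (t • (ξ₀ + ξ) - η) * g η ≤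
      Real.exp (-(r * lam)) * (Cb * g η + C₀ * C'' * Real.exp (-(r'' / 2) * ‖η‖ ^ (1 / s))) := by
    intro η
    have hterm2 : 0 ≤ C₀ * C'' * Real.exp (-(r'' / 2) * ‖η‖ ^ (1 / s)) := by positivity
    rcases le_or_gt ‖η‖ (ε / 2 * t) with hcase | hcase
    · -- small η : the point stays in the cone
      set ξ' := ξ - t⁻¹ • η with hξ'
      have hsmul : ‖t⁻¹ • η‖ = t⁻¹ * ‖η‖ := by
        rw [norm_smul, Real.norm_eq_abs, abs_of_pos (by positivity)]
      have h2 : t⁻¹ * ‖η‖ ≤ ε / 2 := by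
        rw [inv_mul_eq_div, div_le_iff₀ ht]
        linarith
      have hξ'norm2 : ‖ξ'‖ < 3 * ε / 2 := by
        calc ‖ξ'‖ ≤ ‖ξ‖ + ‖t⁻¹ • η‖ := norm_sub_le _ _
          _ < 3 * ε / 2 := by rw [hsmul]; linarith
      have hmem : ξ₀ + ξ' ∈ Γ₂ := hball ξ' (by linarith)
      have heq : t • (ξ₀ + ξ) - η = t • (ξ₀ + ξ') := by
        simp only [hξ', smul_add, smul_sub, smul_inv_smul₀ (ne_of_gt ht)]
        abel
      have hmem2 : t • (ξ₀ + ξ) - η ∈ Γ₂ := by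
        rw [heq]; exact hΓcone _ hmem t ht
      have hlow : ‖ξ₀‖ / 4 ≤ ‖ξ₀ + ξ'‖ := by
        have h3 : ‖ξ₀‖ ≤ ‖ξ₀ + ξ'‖ + ‖ξ'‖ := by
          calc ‖ξ₀‖ = ‖ξ₀ + ξ' - ξ'‖ := by rw [add_sub_cancel_right]
            _ ≤ ‖ξ₀ + ξ'‖ + ‖ξ'‖ := norm_sub_le _ _
        linarith
      have hnorm_eq : ‖t • (ξ₀ + ξ) - η‖ = t * ‖ξ₀ + ξ'‖ := by
        rw [heq, norm_smul, Real.norm_eq_abs, abs_of_pos ht]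
      have hXge : c * lam ≤ ‖t • (ξ₀ + ξ) - η‖ ^ (1 / s) := by
        calc c * lam = (‖ξ₀‖ / 4) ^ (1 / s) * t ^ (1 / s) := by rw [htinv, hcdef]
          _ = (‖ξ₀‖ / 4 * t) ^ (1 / s) := (Real.mul_rpow (by positivity) ht.le).symm
          _ ≤ (t * ‖ξ₀ + ξ'‖) ^ (1 / s) :=
            Real.rpow_le_rpow (by positivity) (by nlinarith) hp0.le
          _ = ‖t • (ξ₀ + ξ) - η‖ ^ (1 / s) := by rw [hnorm_eq]
      have hw_le : w (t • (ξ₀ + ξ) - η) ≤ Cb * Real.exp (-(r * lam)) := by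
        have h1 := hCb _ hmem2
        have hexp : Real.exp (r * lam) ≤
            Real.exp (r / c * ‖t • (ξ₀ + ξ) - η‖ ^ (1 / s)) := by
          apply Real.exp_le_exp.mpr
          have h4 : r * lam = r / c * (c * lam) := by field_simp
          rw [h4]
          exact mul_le_mul_of_nonneg_left hXge (by positivity)
        have hwle : Real.exp (r * lam) * w (t • (ξ₀ + ξ) - η) ≤ Cb :=
          le_trans (mul_le_mul_of_nonneg_right hexp (hw0 _)) h1
        rw [Real.exp_neg]
        calc w (t • (ξ₀ + ξ) - η)
            = (Real.exp (r * lam))⁻¹ * (Real.exp (r * lam) * w (t • (ξ₀ + ξ) - η)) := by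
              rw [← mul_assoc, inv_mul_cancel₀ (Real.exp_ne_zero _), one_mul]
          _ ≤ (Real.exp (r * lam))⁻¹ * Cb := by
              exact mul_le_mul_of_nonneg_left hwle (by positivity)
          _ = Cb * (Real.exp (r * lam))⁻¹ := mul_comm _ _
      calc w (t • (ξ₀ + ξ) - η) * g η
          ≤ Cb * Real.exp (-(r * lam)) * g η :=
            mul_le_mul_of_nonneg_right hw_le (hg0 η)
        _ = Real.exp (-(r * lam)) * (Cb * g η) := by ring
        _ ≤ Real.exp (-(r * lam)) *
              (Cb * g η + C₀ * C'' * Real.exp (-(r'' / 2) * ‖η‖ ^ (1 / s))) :=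
            mul_le_mul_of_nonneg_left (le_add_of_nonneg_right hterm2) (Real.exp_nonneg _)
    · -- large η
      set X := ‖η‖ ^ (1 / s) with hXdef
      have hX0 : 0 ≤ X := Real.rpow_nonneg (norm_nonneg _) _
      have hXge : δ * lam ≤ X := by
        calc δ * lam = (ε / 2) ^ (1 / s) * t ^ (1 / s) := by rw [htinv, hδdef]
          _ = (ε / 2 * t) ^ (1 / s) := (Real.mul_rpow (by positivity) ht.le).symm
          _ ≤ X := Real.rpow_le_rpow (by positivity) hcase.le hp0.le
      have hζ : ‖t • (ξ₀ + ξ)‖ ^ (1 / s) ≤ M * lam := by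
        rw [norm_smul, Real.norm_eq_abs, abs_of_pos ht,
          Real.mul_rpow ht.le (norm_nonneg _), htinv]
        have h5 : ‖ξ₀ + ξ‖ ≤ ‖ξ₀‖ + ε := le_trans (norm_add_le _ _) (by linarith)
        have h6 : ‖ξ₀ + ξ‖ ^ (1 / s) ≤ M :=
          Real.rpow_le_rpow (norm_nonneg _) h5 hp0.le
        nlinarith
      have hw_le : w (t • (ξ₀ + ξ) - η) ≤ C₀ * Real.exp (a * (M * lam + X)) := by
        refine le_trans (hwa _) ?_
        have h1 : ‖t • (ξ₀ + ξ) - η‖ ^ (1 / s) ≤ ‖t • (ξ₀ + ξ)‖ ^ (1 / s) + X := by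
          refine le_trans
            (Real.rpow_le_rpow (norm_nonneg _) (norm_sub_le _ _) hp0.le) ?_
          exact rpow_subadd (norm_nonneg _) (norm_nonneg _) hp0.le hp1
        have h7 : ‖t • (ξ₀ + ξ) - η‖ ^ (1 / s) ≤ M * lam + X := by linarith
        exact mul_le_mul_of_nonneg_left
          (Real.exp_le_exp.mpr (mul_le_mul_of_nonneg_left h7 ha'.le)) hC₀.le
      have hg_le : g η ≤ C'' * Real.exp (-r'' * X) := hgC η
      have hexps : a * (M * lam + X) + -r'' * X ≤ -(r * lam) + -(r'' / 2) * X := by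
        have h5 : r'' / 2 - a = (r + a * M) / δ := by rw [hr''def]; ring
        have h6 : (r + a * M) * lam ≤ (r'' / 2 - a) * X := by
          rw [h5]
          calc (r + a * M) * lam = (r + a * M) / δ * (δ * lam) := by field_simp
            _ ≤ (r + a * M) / δ * X :=
              mul_le_mul_of_nonneg_left hXge (by positivity)
        nlinarith
      calc w (t • (ξ₀ + ξ) - η) * g η
          ≤ (C₀ * Real.exp (a * (M * lam + X))) * (C'' * Real.exp (-r'' * X)) :=
            mul_le_mul hw_le hg_le (hg0 η) (by positivity)
        _ = C₀ * C'' * Real.exp (a * (M * lam + X) + -r'' * X) := by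
            rw [Real.exp_add]; ring
        _ ≤ C₀ * C'' * Real.exp (-(r * lam) + -(r'' / 2) * X) := by
            exact mul_le_mul_of_nonneg_left (Real.exp_le_exp.mpr hexps) (by positivity)
        _ = Real.exp (-(r * lam)) * (C₀ * C'' * Real.exp (-(r'' / 2) * X)) := by
            rw [Real.exp_add]; ring
        _ ≤ Real.exp (-(r * lam)) *
              (Cb * g η + C₀ * C'' * Real.exp (-(r'' / 2) * ‖η‖ ^ (1 / s))) :=
            mul_le_mul_of_nonneg_left
              (le_add_of_nonneg_left (mul_nonneg hCb0 (hg0 η))) (Real.exp_nonneg _)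
  have hRHSint : Integrable (fun η : EuclideanSpace ℝ (Fin d) =>
      Real.exp (-(r * lam)) *
        (Cb * g η + C₀ * C'' * Real.exp (-(r'' / 2) * ‖η‖ ^ (1 / s)))) :=
    ((hgint.const_mul Cb).add (hEint.const_mul (C₀ * C''))).const_mul _
  have hmono := integral_mono_of_nonneg
    (Filter.Eventually.of_forall fun η => mul_nonneg (hw0 _) (hg0 _))
    hRHSint (Filter.Eventually.of_forall key)
  rw [integral_const_mul, integral_add (hgint.const_mul Cb) (hEint.const_mul (C₀ * C'')),
    integral_const_mul, integral_const_mul] at hmono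
  have hfin := mul_le_mul_of_nonneg_left hmono (Real.exp_nonneg (r * lam))
  rw [← mul_assoc, ← Real.exp_add] at hfin
  simpa using hfin
end

section
/- Let t ≥ s > 0, let ξ₀ ∈ ℝ^d with |ξ₀| = 1, and let ε ∈ (0, 1]. Define Γ = { (λ^t x, λ^s (ξ₀ + ξ)) : (x, ξ) ∈ ℝ^d × ℝ^d with |x|² + |ξ|² < ε², λ > 0 } ⊆ ℝ^{2d}. Let x₀ ∈ ℝ^d and δ > 0 satisfy δ(1 + |x₀|) ≤ 1 and δ²(1 + |x₀|²/(1 − δ|x₀|)²) ≤ ε². Then for every η ∈ ℝ^d ∖ {0} with |η/|η| − ξ₀| < δ and |(x₀, η)| ≥ 1/δ one has (x₀, η) ∈ Γ. (This geometric inclusion is the key step showing {0} × π₂ WF_s(u) ⊆ WF^{t,s}(u) when t ≥ s > 1.) -/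
set_option maxHeartbeats 800000 in
/-- Geometric key step for `{0} × π₂ WF_s(u) ⊆ WF^{t,s}(u)` (t ≥ s): points `(x₀, η)`
with `η` close in direction to `ξ₀` and `|(x₀,η)| ≥ 1/δ` lie in the anisotropic conic
set `Γ = {(λ^t x, λ^s(ξ₀+ξ)) : |x|²+|ξ|² < ε², λ > 0}`. -/
theorem anisotropic_cone_contains_ray_nbhd (d : ℕ) (s t : ℝ) (hs : 0 < s) (hst : s ≤ t)
    (ξ₀ : EuclideanSpace ℝ (Fin d)) (hξ₀ : ‖ξ₀‖ = 1)
    (ε : ℝ) (hε : 0 < ε) (hε1 : ε ≤ 1)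
    (x₀ : EuclideanSpace ℝ (Fin d)) (δ : ℝ) (hδ : 0 < δ)
    (h1 : δ * (1 + ‖x₀‖) ≤ 1)
    (h2 : δ ^ 2 * (1 + ‖x₀‖ ^ 2 / (1 - δ * ‖x₀‖) ^ 2) ≤ ε ^ 2)
    (η : EuclideanSpace ℝ (Fin d)) (hη : η ≠ 0)
    (hdir : ‖(‖η‖)⁻¹ • η - ξ₀‖ < δ)
    (hfar : 1 / δ ≤ Real.sqrt (‖x₀‖ ^ 2 + ‖η‖ ^ 2)) :
    ∃ (lam : ℝ) (x ξ : EuclideanSpace ℝ (Fin d)),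
      0 < lam ∧ ‖x‖ ^ 2 + ‖ξ‖ ^ 2 < ε ^ 2 ∧
        x₀ = lam ^ t • x ∧ η = lam ^ s • (ξ₀ + ξ) := by
  set a := ‖x₀‖ with ha
  set N := ‖η‖ with hNdef
  have ha0 : 0 ≤ a := norm_nonneg _
  have hN : 0 < N := norm_pos_iff.mpr hη
  have hD : 0 < 1 - δ * a := by nlinarith
  have hfar' : (1 / δ) ^ 2 ≤ a ^ 2 + N ^ 2 := by
    have h := (Real.le_sqrt (by positivity) (by positivity)).mp hfar
    linarith
  have hfar'' : 1 ≤ δ ^ 2 * (a ^ 2 + N ^ 2) := by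
    have h := mul_le_mul_of_nonneg_left hfar' (sq_nonneg δ)
    have he : δ ^ 2 * (1 / δ) ^ 2 = 1 := by field_simp
    linarith
  have hNge : (1 - δ * a) / δ ≤ N := by
    have h' : ((1 - δ * a) / δ) ^ 2 ≤ N ^ 2 := by
      rw [div_pow, div_le_iff₀ (by positivity)]
      nlinarith [mul_nonneg hδ.le ha0]
    have hpos : 0 ≤ (1 - δ * a) / δ := by positivity
    nlinarith
  have hN1 : 1 ≤ N := by
    have : 1 ≤ (1 - δ * a) / δ := by
      rw [le_div_iff₀ hδ]; nlinarith
    linarith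
  set lam := N ^ (1 / s) with hlam
  have hlam0 : 0 < lam := Real.rpow_pos_of_pos hN _
  have hlams : lam ^ s = N := by
    rw [hlam, ← Real.rpow_mul hN.le, one_div_mul_cancel hs.ne', Real.rpow_one]
  have hlamt : (1 - δ * a) / δ ≤ lam ^ t := by
    have h1' : N ^ (1 : ℝ) ≤ N ^ (1 / s * t) :=
      Real.rpow_le_rpow_of_exponent_le hN1 (by
        rw [div_mul_eq_mul_div, one_mul, le_div_iff₀ hs]; linarith)
    rw [hlam, ← Real.rpow_mul hN.le]
    rw [Real.rpow_one] at h1'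
    linarith
  have hlamt0 : 0 < lam ^ t := Real.rpow_pos_of_pos hlam0 _
  refine ⟨lam, (lam ^ t)⁻¹ • x₀, (N : ℝ)⁻¹ • η - ξ₀, hlam0, ?_, ?_, ?_⟩
  · have hxn : ‖(lam ^ t)⁻¹ • x₀‖ = (lam ^ t)⁻¹ * a := by
      rw [norm_smul, Real.norm_eq_abs, abs_of_pos (by positivity)]
    rw [hxn]
    have hinv : (lam ^ t)⁻¹ ≤ δ / (1 - δ * a) := by
      have h' := inv_anti₀ (by positivity : (0:ℝ) < (1 - δ * a) / δ) hlamt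
      rwa [inv_div] at h'
    have hx2 : ((lam ^ t)⁻¹ * a) ^ 2 ≤ δ ^ 2 * (a ^ 2 / (1 - δ * a) ^ 2) := by
      have h' : (lam ^ t)⁻¹ * a ≤ δ / (1 - δ * a) * a :=
        mul_le_mul_of_nonneg_right hinv ha0
      calc ((lam ^ t)⁻¹ * a) ^ 2 ≤ (δ / (1 - δ * a) * a) ^ 2 := by
            apply pow_le_pow_left₀ (by positivity) h'
        _ = δ ^ 2 * (a ^ 2 / (1 - δ * a) ^ 2) := by field_simp
    have hξ2 : ‖(N : ℝ)⁻¹ • η - ξ₀‖ ^ 2 < δ ^ 2 := by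
      nlinarith [norm_nonneg ((N : ℝ)⁻¹ • η - ξ₀), hdir]
    nlinarith
  · rw [smul_inv_smul₀ hlamt0.ne']
  · rw [hlams, add_sub_cancel, smul_inv_smul₀ hN.ne']
end

section
/- Let t, s > 0 and ε > 0. Define Γ = { (λ^t x, λ^s (ξ₀ + ξ)) : ξ₀ ∈ ℝ^d with |ξ₀| = 1, (x, ξ) ∈ ℝ^d × ℝ^d with |x|² + |ξ|² < ε², λ > 0 } ⊆ ℝ^{2d}. Then every (y, η) ∈ ℝ^d × ℝ^d with η ≠ 0 and |y|^{1/t} < ε^{1/t} |η|^{1/s} belongs to Γ. Consequently there exists C > 0 such that Γ ∪ { (y, η) ∈ ℝ^{2d} ∖ {0} : |η|^{1/s} ≤ C |y|^{1/t} } = ℝ^{2d} ∖ {0}. (This covering of phase space by an anisotropic conic neighborhood of the frequency axis and its complement is the key geometric step in proving that absence of the anisotropic wave front set over the frequency axis forces smoothness with Gevrey–exponential bounds.) -/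
/-- Covering of phase space by an anisotropic conic neighborhood of the frequency axis
and an anisotropic conic neighborhood of the space axis: every `(y, η)` with `η ≠ 0` and
`|y|^{1/t} < ε^{1/t}|η|^{1/s}` lies in
`Γ = {(λ^t x, λ^s(ξ₀+ξ)) : |ξ₀| = 1, |x|²+|ξ|² < ε², λ > 0}`; consequently
`Γ ∪ {(y,η) ≠ 0 : |η|^{1/s} ≤ C|y|^{1/t}} = ℝ^{2d} ∖ 0` for some `C > 0`. -/
theorem anisotropic_cone_covering (d : ℕ) (t s ε : ℝ) (ht : 0 < t) (hs : 0 < s)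
    (hε : 0 < ε) :
    (∀ y η : EuclideanSpace ℝ (Fin d), η ≠ 0 →
      ‖y‖ ^ (1 / t) < ε ^ (1 / t) * ‖η‖ ^ (1 / s) →
        ∃ (ξ₀ x ξ : EuclideanSpace ℝ (Fin d)) (lam : ℝ),
          ‖ξ₀‖ = 1 ∧ ‖x‖ ^ 2 + ‖ξ‖ ^ 2 < ε ^ 2 ∧ 0 < lam ∧
            y = lam ^ t • x ∧ η = lam ^ s • (ξ₀ + ξ)) ∧
    ∃ C : ℝ, 0 < C ∧ ∀ y η : EuclideanSpace ℝ (Fin d), ¬(y = 0 ∧ η = 0) →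
      (∃ (ξ₀ x ξ : EuclideanSpace ℝ (Fin d)) (lam : ℝ),
        ‖ξ₀‖ = 1 ∧ ‖x‖ ^ 2 + ‖ξ‖ ^ 2 < ε ^ 2 ∧ 0 < lam ∧
          y = lam ^ t • x ∧ η = lam ^ s • (ξ₀ + ξ)) ∨
      ‖η‖ ^ (1 / s) ≤ C * ‖y‖ ^ (1 / t) := by
  have key : ∀ y η : EuclideanSpace ℝ (Fin d), η ≠ 0 →
      ‖y‖ ^ (1 / t) < ε ^ (1 / t) * ‖η‖ ^ (1 / s) →
        ∃ (ξ₀ x ξ : EuclideanSpace ℝ (Fin d)) (lam : ℝ),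
          ‖ξ₀‖ = 1 ∧ ‖x‖ ^ 2 + ‖ξ‖ ^ 2 < ε ^ 2 ∧ 0 < lam ∧
            y = lam ^ t • x ∧ η = lam ^ s • (ξ₀ + ξ) := by
    intro y η hη h
    have hηn : 0 < ‖η‖ := norm_pos_iff.mpr hη
    set lam := ‖η‖ ^ (1 / s) with hlam
    have hlam_pos : 0 < lam := Real.rpow_pos_of_pos hηn _
    have hlam_s : lam ^ s = ‖η‖ := by
      rw [hlam, ← Real.rpow_mul (norm_nonneg η), one_div, inv_mul_cancel₀ hs.ne',
        Real.rpow_one]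
    have hlt : 0 < lam ^ t := Real.rpow_pos_of_pos hlam_pos _
    have h2 : ‖y‖ < ε * lam ^ t := by
      have h3 := Real.rpow_lt_rpow (Real.rpow_nonneg (norm_nonneg y) _) h ht
      rwa [← Real.rpow_mul (norm_nonneg y), one_div, inv_mul_cancel₀ ht.ne', Real.rpow_one,
        Real.mul_rpow (Real.rpow_nonneg hε.le _) hlam_pos.le,
        ← Real.rpow_mul hε.le, inv_mul_cancel₀ ht.ne', Real.rpow_one] at h3
    refine ⟨‖η‖⁻¹ • η, (lam ^ t)⁻¹ • y, 0, lam, ?_, ?_, hlam_pos, ?_, ?_⟩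
    · rw [norm_smul, norm_inv, norm_norm, inv_mul_cancel₀ hηn.ne']
    · have hx : ‖(lam ^ t)⁻¹ • y‖ < ε := by
        rw [norm_smul, norm_inv, Real.norm_eq_abs, abs_of_pos hlt]
        rw [inv_mul_lt_iff₀ hlt]
        nlinarith [h2]
      have : ‖(lam ^ t)⁻¹ • y‖ ^ 2 < ε ^ 2 :=
        pow_lt_pow_left₀ hx (norm_nonneg _) two_ne_zero
      simpa using this
    · rw [smul_smul, mul_inv_cancel₀ hlt.ne', one_smul]
    · rw [add_zero, hlam_s, smul_smul, mul_inv_cancel₀ hηn.ne', one_smul]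
  refine ⟨key, (ε ^ (1 / t))⁻¹, by positivity, ?_⟩
  intro y η _
  by_cases hη : η = 0
  · right
    have : (0:ℝ) ^ ((1:ℝ) / s) = 0 := Real.zero_rpow (by positivity)
    simp only [hη, norm_zero, this]
    positivity
  · by_cases hlt : ‖y‖ ^ (1 / t) < ε ^ (1 / t) * ‖η‖ ^ (1 / s)
    · exact Or.inl (key y η hη hlt)
    · right
      push_neg at hlt
      have hεt : 0 < ε ^ ((1:ℝ) / t) := Real.rpow_pos_of_pos hε _
      rw [mul_comm] at hlt
      rw [inv_mul_eq_div, le_div_iff₀ hεt]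
      exact hlt
end
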